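/- arXiv:2511.13286 — 7 statements merged into one kernel-verified Lean document; each statement's English description precedes it below -/
import Mathlib

section
/- Let Ω ⊆ ℝⁿ (n ≥ 2) be a domain, let p, q : Ω → [1,∞) be bounded and α-Hölder continuous for some α ∈ (0,1] with p(x) ≤ q(x) for all x ∈ Ω, let r be bounded with r⁺ ≥ 0, and let a ∈ L^∞(Ω) with a ≥ 0. Then there exists a constant M ≥ 1, depending only on n, p, q, r and a, such that for every ball B ⊆ ℝⁿ with |B| ≤ 1, all x, y ∈ B ∩ Ω, and all t ≥ 0 with 1 ≤ Φ(y,t) ≤ 1/|B|, one has t^{p(x)} ≤ M t^{p(y)} and t^{q(x)} ≤ M t^{q(y)}. -/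
open MeasureTheory Set
open scoped ENNReal

/-- log bound helper: `log w ≤ w^β / β` for `w, β > 0`. -/
lemma log_le_rpow_div {w β : ℝ} (hw : 0 < w) (hβ : 0 < β) : Real.log w ≤ w ^ β / β := by
  rw [le_div_iff₀ hβ, mul_comm, ← Real.log_rpow hw]
  linarith [Real.log_le_sub_one_of_pos (Real.rpow_pos_of_pos hw β), Real.rpow_pos_of_pos hw β]

/-- The logarithmic variable-exponent double phase function
`Φ(x,t) = t^{p(x)} + a(x) t^{q(x)} (log(e+t))^{r(x)}`. -/
noncomputable def Phi {n : ℕ} (p q r a : EuclideanSpace ℝ (Fin n) → ℝ)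
    (x : EuclideanSpace ℝ (Fin n)) (t : ℝ) : ℝ :=
  t ^ p x + a x * t ^ q x * (Real.log (Real.exp 1 + t)) ^ r x

set_option maxHeartbeats 1600000 in
/-- if `p, q` are bounded `α`-Hölder continuous exponents with `p ≤ q`,
then there is `M ≥ 1` such that for every ball `B` with `|B| ≤ 1`, all `x, y ∈ B ∩ Ω`
and `t ≥ 0` with `1 ≤ Φ(y,t) ≤ 1/|B|`, one has `t^{p(x)} ≤ M t^{p(y)}` and
`t^{q(x)} ≤ M t^{q(y)}`. -/
theorem stmt_4 {n : ℕ} (hn : 2 ≤ n)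
    (Ω : Set (EuclideanSpace ℝ (Fin n))) (hΩo : IsOpen Ω) (hΩc : IsConnected Ω)
    (p q r a : EuclideanSpace ℝ (Fin n) → ℝ)
    (hpB : BddAbove (p '' Ω)) (hqB : BddAbove (q '' Ω))
    (hp1 : ∀ x ∈ Ω, 1 ≤ p x) (hq1 : ∀ x ∈ Ω, 1 ≤ q x)
    (hpq : ∀ x ∈ Ω, p x ≤ q x)
    (α : ℝ) (hα : α ∈ Set.Ioc (0:ℝ) 1)
    (cp : ℝ) (hcp : 0 < cp)
    (hpH : ∀ x ∈ Ω, ∀ y ∈ Ω, |p x - p y| ≤ cp * dist x y ^ α)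
    (cq : ℝ) (hcq : 0 < cq)
    (hqH : ∀ x ∈ Ω, ∀ y ∈ Ω, |q x - q y| ≤ cq * dist x y ^ α)
    (hrB : BddAbove (r '' Ω)) (hrb : BddBelow (r '' Ω)) (hrplus : 0 ≤ sSup (r '' Ω))
    (ha0 : ∀ x ∈ Ω, 0 ≤ a x) (haB : BddAbove (a '' Ω)) :
    ∃ M : ℝ, 1 ≤ M ∧
      ∀ (z : EuclideanSpace ℝ (Fin n)) (ρ : ℝ), 0 < ρ →
        volume (Metric.ball z ρ) ≤ 1 →
        ∀ x ∈ Metric.ball z ρ ∩ Ω, ∀ y ∈ Metric.ball z ρ ∩ Ω,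
          ∀ t : ℝ, 0 ≤ t → 1 ≤ Phi p q r a y t →
            Phi p q r a y t ≤ 1 / (volume (Metric.ball z ρ)).toReal →
            t ^ p x ≤ M * t ^ p y ∧ t ^ q x ≤ M * t ^ q y := by
  obtain ⟨hα0, hα1⟩ := hα
  set u := (volume (Metric.ball (0 : EuclideanSpace ℝ (Fin n)) 1)).toReal with hu
  have hu_pos : 0 < u :=
    ENNReal.toReal_pos (Metric.measure_ball_pos _ _ one_pos).ne' measure_ball_lt_top.ne
  set R := sSup (r '' Ω) with hR
  set A := max (sSup (a '' Ω)) 0 with hA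
  have hA0 : 0 ≤ A := le_max_right _ _
  have h2R : (0:ℝ) < (2:ℝ) ^ R := Real.rpow_pos_of_pos two_pos R
  set C := 1 + A * (2:ℝ) ^ R with hC
  have hC1 : (1:ℝ) ≤ C := by
    have := mul_nonneg hA0 h2R.le; rw [hC]; linarith
  have hC0 : (0:ℝ) < C := by linarith
  have hlogC : 0 ≤ Real.log C := Real.log_nonneg hC1
  set cs := max cp cq with hcs
  have hcs0 : 0 < cs := lt_max_of_lt_left hcp
  have hn0 : (0:ℝ) < (n:ℝ) := by exact_mod_cast (by omega : 0 < n)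
  set ρ₁ := (1/u) ^ ((1:ℝ)/n) with hρ₁def
  have hρ₁ : 0 < ρ₁ := Real.rpow_pos_of_pos (by positivity) _
  set β := α / (2*n) with hβdef
  have hβ : 0 < β := by positivity
  have huβ : 0 < u ^ (-β) := Real.rpow_pos_of_pos hu_pos _
  set K := cs * (2*ρ₁)^α * Real.log C + cs * 2^α * u^(-β) / β * ρ₁^(α/2) with hK
  have h2ρ₁α : (0:ℝ) < (2*ρ₁)^α := Real.rpow_pos_of_pos (by positivity) _
  have hρ₁α2 : (0:ℝ) < ρ₁^(α/2) := Real.rpow_pos_of_pos hρ₁ _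
  have h2α : (0:ℝ) < (2:ℝ)^α := Real.rpow_pos_of_pos two_pos _
  have hKa : 0 ≤ cs * (2*ρ₁)^α * Real.log C :=
    mul_nonneg (mul_nonneg hcs0.le h2ρ₁α.le) hlogC
  have hKb : 0 ≤ cs * 2^α * u^(-β) / β * ρ₁^(α/2) :=
    mul_nonneg (div_nonneg (mul_nonneg (mul_nonneg hcs0.le h2α.le) huβ.le) hβ.le) hρ₁α2.le
  have hK0 : 0 ≤ K := by rw [hK]; linarith
  refine ⟨Real.exp K, Real.one_le_exp hK0, ?_⟩
  intro z ρ hρ hvol x hx y hy t ht hΦ1 hΦv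
  obtain ⟨hxB, hxΩ⟩ := hx
  obtain ⟨hyB, hyΩ⟩ := hy
  set v := (volume (Metric.ball z ρ)).toReal with hv
  have hv_eq : v = ρ ^ n * u := by
    rw [hv, hu, Measure.addHaar_ball_of_pos _ z hρ, ENNReal.toReal_mul,
      ENNReal.toReal_ofReal (by positivity), finrank_euclideanSpace_fin]
  have hv_pos : 0 < v := by rw [hv_eq]; positivity
  have hv1 : v ≤ 1 := by
    have := ENNReal.toReal_mono ENNReal.one_ne_top hvol
    simpa using this
  have hρρ₁ : ρ ≤ ρ₁ := by
    have h1 : ρ ^ (n:ℝ) ≤ 1/u := by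
      rw [Real.rpow_natCast, le_div_iff₀ hu_pos]
      rw [hv_eq] at hv1; linarith
    have h2 : ((n:ℝ) * ((1:ℝ)/n)) = 1 := by field_simp
    calc ρ = ρ ^ ((n:ℝ) * ((1:ℝ)/n)) := by rw [h2, Real.rpow_one]
      _ = (ρ ^ (n:ℝ)) ^ ((1:ℝ)/n) := Real.rpow_mul hρ.le _ _
      _ ≤ ρ₁ := Real.rpow_le_rpow (Real.rpow_nonneg hρ.le _) h1 (by positivity)
  have hpy1 := hp1 y hyΩ
  have hqy1 := hq1 y hyΩ
  have ht0 : 0 < t := by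
    rcases ht.lt_or_eq with h | h
    · exact h
    · exfalso
      rw [← h] at hΦ1
      simp [Phi, Real.zero_rpow (by linarith : p y ≠ 0),
        Real.zero_rpow (by linarith : q y ≠ 0)] at hΦ1
      linarith
  have hdist : dist x y ^ α ≤ (2*ρ)^α := by
    have h1 := Metric.mem_ball.mp hxB
    have h2 := Metric.mem_ball.mp hyB
    refine Real.rpow_le_rpow dist_nonneg ?_ hα0.le
    calc dist x y ≤ dist x z + dist z y := dist_triangle _ _ _
      _ = dist x z + dist y z := by rw [dist_comm z y]
      _ ≤ 2 * ρ := by linarith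
  have h2ρα : (0:ℝ) < (2*ρ)^α := Real.rpow_pos_of_pos (by positivity) _
  have h2ρ1 : (2*ρ)^α ≤ (2*ρ₁)^α := Real.rpow_le_rpow (by positivity) (by linarith) hα0.le
  have hL1 : (1:ℝ) ≤ Real.log (Real.exp 1 + t) := by
    have h := Real.log_le_log (Real.exp_pos 1)
      (le_add_of_nonneg_right ht : Real.exp 1 ≤ Real.exp 1 + t)
    rwa [Real.log_exp] at h
  have hcore : ∀ δ : ℝ, |δ| ≤ cs * (2*ρ)^α → δ * Real.log t ≤ K := by
    intro δ hδ
    rcases le_total t 1 with ht1 | ht1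
    · -- small t : lower bound t ≥ 1/C
      have hLhigh : Real.log (Real.exp 1 + t) ≤ 2 := by
        have he : (2:ℝ) ≤ Real.exp 1 := by
          have := Real.add_one_le_exp (1:ℝ); linarith
        have h1 : Real.exp 1 + t ≤ Real.exp 2 := by
          have h2 : Real.exp 2 = Real.exp 1 * Real.exp 1 := by
            rw [← Real.exp_add]; norm_num
          have h4 : 2 * Real.exp 1 ≤ Real.exp 1 * Real.exp 1 :=
            mul_le_mul_of_nonneg_right he (Real.exp_pos 1).le
          linarith
        calc Real.log (Real.exp 1 + t) ≤ Real.log (Real.exp 2) :=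
              Real.log_le_log (by positivity) h1
          _ = 2 := Real.log_exp 2
      have hLry : Real.log (Real.exp 1 + t) ^ r y ≤ (2:ℝ)^R := by
        have hry : r y ≤ R := le_csSup hrB ⟨y, hyΩ, rfl⟩
        calc Real.log (Real.exp 1 + t) ^ r y
            ≤ Real.log (Real.exp 1 + t) ^ R :=
              Real.rpow_le_rpow_of_exponent_le hL1 hry
          _ ≤ (2:ℝ)^R := Real.rpow_le_rpow (by linarith) hLhigh hrplus
      have hay : a y ≤ A := le_max_of_le_left (le_csSup haB ⟨y, hyΩ, rfl⟩)
      have htq : t ^ q y ≤ t ^ p y :=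
        Real.rpow_le_rpow_of_exponent_ge ht0 ht1 (hpq y hyΩ)
      have hq0 : 0 ≤ t ^ q y := Real.rpow_nonneg ht _
      have hp0 : 0 ≤ t ^ p y := Real.rpow_nonneg ht _
      have hL0 : 0 ≤ Real.log (Real.exp 1 + t) ^ r y := Real.rpow_nonneg (by linarith) _
      have hay0 := ha0 y hyΩ
      have hΦle : Phi p q r a y t ≤ C * t ^ p y := by
        have s1 : a y * t ^ q y ≤ A * t ^ p y := mul_le_mul hay htq hq0 hA0
        have s2 : a y * t ^ q y * Real.log (Real.exp 1 + t) ^ r y ≤ A * (2:ℝ)^R * t ^ p y := by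
          calc a y * t ^ q y * Real.log (Real.exp 1 + t) ^ r y ≤ A * t ^ p y * (2:ℝ)^R :=
                mul_le_mul s1 hLry hL0 (by positivity)
            _ = A * (2:ℝ)^R * t ^ p y := by ring
        have s3 : C * t ^ p y = t ^ p y + A * (2:ℝ)^R * t ^ p y := by rw [hC]; ring
        simp only [Phi]
        linarith
      have htlb : 1/C ≤ t := by
        by_contra h
        push_neg at h
        have h1 : t ^ p y ≤ t := by
          calc t ^ p y ≤ t ^ (1:ℝ) := Real.rpow_le_rpow_of_exponent_ge ht0 ht1 hpy1
            _ = t := Real.rpow_one t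
        have h2 : C * t < 1 := by
          have := (mul_lt_mul_of_pos_left h hC0)
          rw [mul_one_div, div_self hC0.ne'] at this
          exact this
        have h3 : C * t ^ p y ≤ C * t := mul_le_mul_of_nonneg_left h1 hC0.le
        linarith
      have hlogt_lb : -Real.log C ≤ Real.log t := by
        have := Real.log_le_log (by positivity) htlb
        rwa [one_div, Real.log_inv] at this
      have hlogt_le0 : Real.log t ≤ 0 := Real.log_nonpos ht ht1
      calc δ * Real.log t ≤ |δ| * (-Real.log t) := by
            have he : δ * Real.log t = (-δ) * (-Real.log t) := by ring
            rw [he]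
            exact mul_le_mul_of_nonneg_right (neg_le_abs δ) (by linarith)
        _ ≤ (cs * (2*ρ)^α) * Real.log C := by
            apply mul_le_mul hδ (by linarith) (by linarith) (by positivity)
        _ ≤ cs * (2*ρ₁)^α * Real.log C :=
            mul_le_mul_of_nonneg_right (mul_le_mul_of_nonneg_left h2ρ1 hcs0.le) hlogC
        _ ≤ K := by rw [hK]; linarith
    · -- large t : upper bound t ≤ 1/v
      have hlogt0 : 0 ≤ Real.log t := Real.log_nonneg ht1
      have htpΦ : t ≤ Phi p q r a y t := by
        have h2 : t ^ (1:ℝ) ≤ t ^ p y := Real.rpow_le_rpow_of_exponent_le ht1 hpy1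
        rw [Real.rpow_one] at h2
        have h3 : 0 ≤ a y * t ^ q y * Real.log (Real.exp 1 + t) ^ r y := by
          have hay0 := ha0 y hyΩ
          exact mul_nonneg (mul_nonneg hay0 (Real.rpow_nonneg ht _))
            (Real.rpow_nonneg (by linarith) _)
        simp only [Phi]; linarith
      have htv : t ≤ 1/v := le_trans htpΦ hΦv
      have hlogt_le : Real.log t ≤ (1/v)^β / β := by
        calc Real.log t ≤ Real.log (1/v) := Real.log_le_log ht0 htv
          _ ≤ (1/v)^β / β := log_le_rpow_div (by positivity) hβ
      have hvb : (1/v)^β = u^(-β) * ρ^(-(α/2)) := by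
        have e1 : (1/v) = (ρ ^ (n:ℝ))⁻¹ * u⁻¹ := by
          rw [hv_eq, Real.rpow_natCast, one_div, mul_inv]
        rw [e1, Real.mul_rpow (by positivity) (by positivity),
          ← Real.rpow_neg_one (ρ ^ (n:ℝ)), ← Real.rpow_neg_one u,
          ← Real.rpow_mul hρ.le, ← Real.rpow_mul hρ.le, ← Real.rpow_mul hu_pos.le]
        have e2 : ((n:ℝ) * -1 * β) = -(α/2) := by
          rw [hβdef]; field_simp
        have e3 : ((-1:ℝ) * β) = -β := by ring
        rw [e2, e3, mul_comm]
      have hfin : (cs * (2*ρ)^α) * ((1/v)^β / β) = cs * 2^α * u^(-β) / β * ρ^(α/2) := by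
        have hmul : ρ ^ α * ρ ^ (-(α/2)) = ρ^(α/2) := by
          rw [← Real.rpow_add hρ]; ring_nf
        rw [hvb, Real.mul_rpow (by norm_num) hρ.le, ← hmul]; field_simp
      calc δ * Real.log t ≤ |δ| * Real.log t :=
            mul_le_mul_of_nonneg_right (le_abs_self δ) hlogt0
        _ ≤ (cs * (2*ρ)^α) * ((1/v)^β / β) := by
            apply mul_le_mul hδ hlogt_le hlogt0 (by positivity)
        _ = cs * 2^α * u^(-β) / β * ρ^(α/2) := hfin
        _ ≤ cs * 2^α * u^(-β) / β * ρ₁^(α/2) := by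
            apply mul_le_mul_of_nonneg_left
              (Real.rpow_le_rpow hρ.le hρρ₁ (by positivity)) (by positivity)
        _ ≤ K := by rw [hK]; linarith
  have main : ∀ s : EuclideanSpace ℝ (Fin n) → ℝ, |s x - s y| ≤ cs * (2*ρ)^α →
      t ^ s x ≤ Real.exp K * t ^ s y := by
    intro s hs
    have h1 : t ^ s x = t ^ s y * t ^ (s x - s y) := by
      rw [← Real.rpow_add ht0]; ring_nf
    rw [h1]
    have h2 : t ^ (s x - s y) ≤ Real.exp K := by
      rw [Real.rpow_def_of_pos ht0]
      refine Real.exp_le_exp.mpr ?_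
      rw [mul_comm]
      exact hcore _ hs
    calc t ^ s y * t ^ (s x - s y) ≤ t ^ s y * Real.exp K :=
          mul_le_mul_of_nonneg_left h2 (Real.rpow_nonneg ht _)
      _ = Real.exp K * t ^ s y := mul_comm _ _
  constructor
  · refine main p ?_
    calc |p x - p y| ≤ cp * dist x y ^ α := hpH x hxΩ y hyΩ
      _ ≤ cs * (2*ρ)^α :=
        mul_le_mul (le_max_left _ _) hdist (Real.rpow_nonneg dist_nonneg _) hcs0.le
  · refine main q ?_
    calc |q x - q y| ≤ cq * dist x y ^ α := hqH x hxΩ y hyΩ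
      _ ≤ cs * (2*ρ)^α :=
        mul_le_mul (le_max_right _ _) hdist (Real.rpow_nonneg dist_nonneg _) hcs0.le
end

section
/- Let Ω ⊆ ℝⁿ (n ≥ 2) be a domain, let p, q : Ω → [1,∞) be bounded with p(x) ≤ q(x) for all x ∈ Ω, let r : Ω → [0,∞) be bounded and log-log-Hölder continuous, and let a ∈ L^∞(Ω) with a ≥ 0. Then there exists a constant N ≥ 1, depending only on n and r, such that for every ball B ⊆ ℝⁿ with |B| ≤ 1, all x, y ∈ B ∩ Ω, and all t ≥ 0 with 1 ≤ Φ(y,t) ≤ 1/|B|, one has (log(e+t))^{r(x)} ≤ N (log(e+t))^{r(y)}. -/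
open MeasureTheory Set
open scoped ENNReal

set_option maxHeartbeats 1600000 in
/-- if `r ≥ 0` is bounded and log-log-Hölder continuous, then there is
`N ≥ 1` such that for every ball `B` with `|B| ≤ 1`, all `x, y ∈ B ∩ Ω` and `t ≥ 0`
with `1 ≤ Φ(y,t) ≤ 1/|B|`, one has `(log(e+t))^{r(x)} ≤ N (log(e+t))^{r(y)}`. -/
theorem stmt_5 {n : ℕ} (hn : 2 ≤ n)
    (Ω : Set (EuclideanSpace ℝ (Fin n))) (hΩo : IsOpen Ω) (hΩc : IsConnected Ω)
    (p q r a : EuclideanSpace ℝ (Fin n) → ℝ)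
    (hpB : BddAbove (p '' Ω)) (hqB : BddAbove (q '' Ω))
    (hp1 : ∀ x ∈ Ω, 1 ≤ p x) (hq1 : ∀ x ∈ Ω, 1 ≤ q x)
    (hpq : ∀ x ∈ Ω, p x ≤ q x)
    (hr0 : ∀ x ∈ Ω, 0 ≤ r x) (hrB : BddAbove (r '' Ω))
    (Cr : ℝ) (hCr : 0 < Cr)
    (hrH : ∀ x ∈ Ω, ∀ y ∈ Ω, x ≠ y →
      |r x - r y| ≤ Cr / Real.log (Real.exp 1 + Real.log (Real.exp 1 + 1 / dist x y)))
    (ha0 : ∀ x ∈ Ω, 0 ≤ a x) (haB : BddAbove (a '' Ω)) :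
    ∃ N : ℝ, 1 ≤ N ∧
      ∀ (z : EuclideanSpace ℝ (Fin n)) (ρ : ℝ), 0 < ρ →
        volume (Metric.ball z ρ) ≤ 1 →
        ∀ x ∈ Metric.ball z ρ ∩ Ω, ∀ y ∈ Metric.ball z ρ ∩ Ω,
          ∀ t : ℝ, 0 ≤ t → 1 ≤ Phi p q r a y t →
            Phi p q r a y t ≤ 1 / (volume (Metric.ball z ρ)).toReal →
            (Real.log (Real.exp 1 + t)) ^ r x ≤ N * (Real.log (Real.exp 1 + t)) ^ r y := by
  classical
  obtain ⟨M, hM⟩ := hrB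
  set e := Real.exp 1 with he
  have he1 : (1:ℝ) ≤ e := by
    have := Real.add_one_le_exp (1:ℝ); linarith
  have he2 : (2:ℝ) ≤ e := by
    have := Real.add_one_le_exp (1:ℝ); linarith
  have he0 : (0:ℝ) < e := lt_of_lt_of_le one_pos he1
  -- volume of the unit ball
  set c := (volume (Metric.ball (0 : EuclideanSpace ℝ (Fin n)) 1)).toReal with hc
  have hc0 : 0 < c := by
    apply ENNReal.toReal_pos
    · exact (Metric.measure_ball_pos volume 0 one_pos).ne'
    · exact measure_ball_lt_top.ne
  have hballvol : ∀ (z : EuclideanSpace ℝ (Fin n)) (ρ : ℝ), 0 < ρ →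
      (volume (Metric.ball z ρ)).toReal = ρ ^ n * c := by
    intro z ρ hρ
    rw [hc, MeasureTheory.Measure.addHaar_ball_of_pos volume z hρ,
      finrank_euclideanSpace_fin, ENNReal.toReal_mul,
      ENNReal.toReal_ofReal (by positivity)]
  clear_value c
  have h2nc : (0:ℝ) < 2 ^ n / c := by positivity
  set Kc : ℝ := Real.log (e + 2 ^ n / c) with hKcdef
  have hKc1 : 1 ≤ Kc := by
    rw [hKcdef]
    calc (1:ℝ) = Real.log e := (Real.log_exp 1).symm
    _ ≤ _ := Real.log_le_log he0 (by linarith)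
  clear_value Kc
  have hn2 : (2:ℝ) ≤ (n:ℝ) := by exact_mod_cast hn
  have hKcn1 : (1:ℝ) ≤ Kc * n := by
    nlinarith [mul_nonneg (sub_nonneg.2 hKc1) (by linarith : (0:ℝ) ≤ (n:ℝ) - 2)]
  set A : ℝ := Cr * (Real.log (Kc * n) + 1) with hAdef
  have hlogKcn : 0 ≤ Real.log (Kc * n) := Real.log_nonneg hKcn1
  have hA0 : 0 ≤ A := by
    rw [hAdef]; positivity
  set M' : ℝ := max M 1 with hM'
  set N : ℝ := max (Real.exp A) ((2:ℝ) ^ M') with hN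
  have hN1 : 1 ≤ N := le_trans (Real.one_le_exp hA0) (le_max_left _ _)
  refine ⟨N, hN1, ?_⟩
  intro z ρ hρ hVle x hx y hy t ht hΦ1 hΦV
  obtain ⟨hxB, hxΩ⟩ := hx
  obtain ⟨hyB, hyΩ⟩ := hy
  have hlog1 : 1 ≤ Real.log (e + t) := by
    calc (1:ℝ) = Real.log e := (Real.log_exp 1).symm
    _ ≤ _ := Real.log_le_log he0 (by linarith)
  have hlogpos : 0 < Real.log (e + t) := lt_of_lt_of_le one_pos hlog1
  have hry0 : 0 ≤ r y := hr0 y hyΩ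
  have hrx0 : 0 ≤ r x := hr0 x hxΩ
  have hry1 : (1:ℝ) ≤ Real.log (e + t) ^ r y := by
    calc (1:ℝ) = 1 ^ r y := (Real.one_rpow _).symm
    _ ≤ _ := Real.rpow_le_rpow zero_le_one hlog1 hry0
  have hrynn : (0:ℝ) ≤ Real.log (e + t) ^ r y := Real.rpow_nonneg hlogpos.le _
  rcases le_or_gt t 1 with ht1 | ht1
  · -- small t : log(e+t) ≤ 2
    have h2 : Real.log (e + t) ≤ 2 := by
      rw [Real.log_le_iff_le_exp (by linarith)]
      have hee : Real.exp 2 = e * e := by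
        rw [he, ← Real.exp_add]; norm_num
      rw [hee]; nlinarith
    have h1 : Real.log (e + t) ^ r x ≤ (2:ℝ) ^ M' := by
      calc Real.log (e + t) ^ r x ≤ (2:ℝ) ^ r x :=
            Real.rpow_le_rpow hlogpos.le h2 hrx0
      _ ≤ (2:ℝ) ^ M' := by
            apply Real.rpow_le_rpow_of_exponent_le one_le_two
            exact le_max_of_le_left (hM ⟨x, hxΩ, rfl⟩)
    calc Real.log (e + t) ^ r x ≤ (2:ℝ) ^ M' := h1
    _ ≤ N := le_max_right _ _
    _ ≤ N * Real.log (e + t) ^ r y :=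
        le_mul_of_one_le_right (by linarith) hry1
  · -- large t
    set V := (volume (Metric.ball z ρ)).toReal with hV
    have hVform : V = ρ ^ n * c := hballvol z ρ hρ
    clear_value V
    have hV0 : 0 < V := hVform ▸ mul_pos (pow_pos hρ n) hc0
    have htV : t ≤ 1 / V := by
      have h1 : t ≤ t ^ p y := by
        calc t = t ^ (1:ℝ) := (Real.rpow_one t).symm
        _ ≤ t ^ p y := Real.rpow_le_rpow_of_exponent_le ht1.le (hp1 y hyΩ)
      have h2 : t ^ p y ≤ Phi p q r a y t := by
        have hnn : 0 ≤ a y * t ^ q y * (Real.log (Real.exp 1 + t)) ^ r y :=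
          mul_nonneg (mul_nonneg (ha0 y hyΩ) (Real.rpow_nonneg ht _))
            (Real.rpow_nonneg (he ▸ hlogpos.le) _)
        unfold Phi; linarith
      linarith
    rcases le_or_gt (r x) (r y) with hle | hlt
    · calc Real.log (e + t) ^ r x ≤ Real.log (e + t) ^ r y :=
            Real.rpow_le_rpow_of_exponent_le hlog1 hle
      _ ≤ N * Real.log (e + t) ^ r y :=
            le_mul_of_one_le_left hrynn hN1
    · -- r x > r y : use log-log-Hölder continuity
      have hne : x ≠ y := by rintro rfl; exact lt_irrefl _ hlt
      set d := dist x y with hd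
      have hd0 : 0 < d := dist_pos.2 hne
      have hd2ρ : d < 2 * ρ := by
        calc d ≤ dist x z + dist z y := dist_triangle x z y
        _ < ρ + ρ := by
            have h1 := Metric.mem_ball.1 hxB
            have h2 := Metric.mem_ball.1 hyB
            rw [dist_comm z y]; linarith
        _ = 2 * ρ := by ring
      have hinvd : (0:ℝ) < 1 / d := by positivity
      set s : ℝ := Real.log (e + 1 / d) with hsdef
      have hs1 : 1 ≤ s := by
        rw [hsdef]
        calc (1:ℝ) = Real.log e := (Real.log_exp 1).symm
        _ ≤ _ := Real.log_le_log he0 (by linarith)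
      set L : ℝ := Real.log (e + s) with hLdef
      have hL1 : 1 ≤ L := by
        rw [hLdef]
        calc (1:ℝ) = Real.log e := (Real.log_exp 1).symm
        _ ≤ _ := Real.log_le_log he0 (by linarith)
      have hL0 : 0 < L := lt_of_lt_of_le one_pos hL1
      have hδ : r x - r y ≤ Cr / L := by
        have hh := hrH x hxΩ y hyΩ hne
        rw [hLdef, hsdef, hd]
        calc r x - r y ≤ |r x - r y| := le_abs_self _
        _ ≤ _ := hh
      clear_value s L
      -- 1/V ≤ (2^n/c) * (1/d)^n
      have hdn0 : (0:ℝ) < (d/2)^n := pow_pos (by linarith) n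
      have h1V : 1 / V ≤ 2 ^ n / c * (1 / d) ^ n := by
        have hlow : (d/2)^n * c ≤ V := by
          rw [hVform]
          exact mul_le_mul_of_nonneg_right
            (pow_le_pow_left₀ (by linarith) (by linarith) n) hc0.le
        have h1 : 1 / V ≤ 1 / ((d/2)^n * c) :=
          one_div_le_one_div_of_le (mul_pos hdn0 hc0) hlow
        have h2 : 1 / ((d/2)^n * c) = 2 ^ n / c * (1 / d) ^ n := by
          rw [div_pow, div_pow, one_pow]
          field_simp
        calc 1 / V ≤ 1 / ((d/2)^n * c) := h1
        _ = _ := h2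
      have hinvV0 : (0:ℝ) < 1 / V := by positivity
      have hB'0 : (0:ℝ) < (1/d)^n := pow_pos hinvd n
      have hlogV1 : 1 ≤ Real.log (e + 1 / V) := by
        calc (1:ℝ) = Real.log e := (Real.log_exp 1).symm
        _ ≤ _ := Real.log_le_log he0 (by linarith)
      have h3 : Real.log (e + 1/V) ≤ Kc + n * s := by
        have hpow : e + (1/d)^n ≤ (e + 1/d)^n := by
          calc e + (1/d)^n ≤ e^n + (1/d)^n := by
                have h4 : e ≤ e ^ n := le_self_pow₀ he1 (by omega)
                linarith
          _ ≤ (e + 1/d)^n := pow_add_pow_le he0.le hinvd.le (by omega)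
        have hAB : e + (2 ^ n / c) * (1/d)^n ≤ (e + 2^n/c) * (e + (1/d)^n) := by
          have hexpand : (e + 2^n/c) * (e + (1/d)^n)
              = e*e + e*((1/d)^n) + (2^n/c)*e + (2^n/c)*(1/d)^n := by ring
          have hee : e ≤ e*e := le_mul_of_one_le_left he0.le he1
          have h5 : 0 ≤ e*((1/d)^n) := mul_nonneg he0.le hB'0.le
          have h6 : 0 ≤ (2^n/c)*e := mul_nonneg h2nc.le he0.le
          linarith
        have h2 : e + 1/V ≤ (e + 2^n/c) * (e + 1/d)^n := by
          calc e + 1/V ≤ e + 2^n/c*(1/d)^n := by linarith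
          _ ≤ (e+2^n/c)*(e+(1/d)^n) := hAB
          _ ≤ (e+2^n/c)*(e+1/d)^n :=
              mul_le_mul_of_nonneg_left hpow (by linarith)
        calc Real.log (e + 1/V) ≤ Real.log ((e + 2^n/c) * (e+1/d)^n) :=
              Real.log_le_log (by linarith) h2
        _ = Kc + n * s := by
              rw [Real.log_mul (by linarith : e + 2^n/c ≠ 0)
                (pow_ne_zero n (by linarith : e + 1/d ≠ 0)), Real.log_pow,
                hsdef, hKcdef]
      have hns0 : (0:ℝ) ≤ (n:ℝ) * s := mul_nonneg (by linarith) (by linarith)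
      have h4 : Kc + n * s ≤ Kc * n * (e + s) := by
        have hne1 : (1:ℝ) ≤ (n:ℝ) * e := by
          have h9 : (1:ℝ)*(1:ℝ) ≤ (n:ℝ)*e :=
            mul_le_mul (by linarith) he1 zero_le_one (by linarith)
          linarith
        have t1 : Kc ≤ Kc * (n * e) :=
          le_mul_of_one_le_right (by linarith) hne1
        have t2 : (n:ℝ) * s ≤ Kc * (n * s) := le_mul_of_one_le_left hns0 hKc1
        calc Kc + (n:ℝ) * s ≤ Kc * (n * e) + Kc * (n * s) := add_le_add t1 t2
        _ = Kc * n * (e + s) := by ring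
      have hKn0 : (0:ℝ) < Kc * n := by linarith
      have hloglogt : Real.log (Real.log (e+t)) ≤ Real.log (Kc * n) + L := by
        calc Real.log (Real.log (e+t)) ≤ Real.log (Real.log (e + 1/V)) := by
              apply Real.log_le_log hlogpos
              apply Real.log_le_log (by linarith)
              have : Real.log (e + t) ≤ e + t - 1 := by
                have := Real.log_le_sub_one_of_pos (show (0:ℝ) < e + t by linarith)
                linarith
              linarith
        _ ≤ Real.log (Kc + n * s) := Real.log_le_log (by linarith) h3
        _ ≤ Real.log (Kc * n * (e + s)) := Real.log_le_log (by linarith) h4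
        _ = Real.log (Kc * n) + L := by
              rw [Real.log_mul hKn0.ne' (by linarith : e + s ≠ 0), hLdef]
      have hll2 : Real.log (Real.log (e+t)) ≤ (Real.log (Kc*n) + 1) * L := by
        have hprod : 0 ≤ Real.log (Kc*n) * (L-1) := mul_nonneg hlogKcn (by linarith)
        have hexpand : (Real.log (Kc*n)+1)*L
            = Real.log (Kc*n)*(L-1) + Real.log (Kc*n) + L := by ring
        linarith
      have hexp : (r x - r y) * Real.log (Real.log (e+t)) ≤ A := by
        have hll0 : 0 ≤ Real.log (Real.log (e+t)) := Real.log_nonneg hlog1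
        have h1 : (r x - r y) * Real.log (Real.log (e+t))
            ≤ (Cr / L) * ((Real.log (Kc*n)+1)*L) :=
          mul_le_mul hδ hll2 hll0
            (div_nonneg hCr.le hL0.le)
        have h2 : (Cr / L) * ((Real.log (Kc*n)+1)*L) = A := by
          rw [hAdef]; field_simp
        linarith
      have hsplit : Real.log (e+t) ^ r x
          = Real.log (e+t) ^ r y * Real.log (e+t) ^ (r x - r y) := by
        rw [← Real.rpow_add hlogpos]; ring_nf
      have hfac : Real.log (e+t) ^ (r x - r y) ≤ N := by
        rw [Real.rpow_def_of_pos hlogpos]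
        calc Real.exp (Real.log (Real.log (e+t)) * (r x - r y)) ≤ Real.exp A := by
              apply Real.exp_le_exp.2
              calc Real.log (Real.log (e+t)) * (r x - r y)
                  = (r x - r y) * Real.log (Real.log (e+t)) := mul_comm _ _
              _ ≤ A := hexp
        _ ≤ N := le_max_left _ _
      calc Real.log (e+t) ^ r x
          = Real.log (e+t) ^ r y * Real.log (e+t) ^ (r x - r y) := hsplit
      _ ≤ Real.log (e+t) ^ r y * N :=
          mul_le_mul_of_nonneg_left hfac hrynn
      _ = N * Real.log (e+t) ^ r y := mul_comm _ _
end

section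
/- Let Ω ⊆ ℝⁿ (n ≥ 2) be a bounded domain. Suppose p, q : closure(Ω) → [1,∞) are Hölder continuous with p(x) ≤ q(x) for all x ∈ closure(Ω), a : closure(Ω) → [0,∞) is γ-Hölder continuous for some γ ∈ (0,1], sup_{x ∈ closure(Ω)} q(x)/p(x) < 1 + γ/n, and r : closure(Ω) → [0,∞) is log-log-Hölder continuous. Then Φ satisfies condition (A1)': there exists β ∈ (0,1) such that Φ(x, β t) ≤ Φ(y, t) for every ball B ⊆ ℝⁿ with |B| ≤ 1, all x, y ∈ B ∩ Ω, and every t ≥ 0 with 1 ≤ Φ(y,t) ≤ 1/|B|. -/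
open MeasureTheory Set
open scoped ENNReal

lemma myL1 {κ s : ℝ} (hκ : 0 < κ) (hs : 0 < s) :
    s ^ κ * Real.log (1/s) ≤ 1/κ := by
  have h1 : Real.log (1/s) ≤ (1/s) ^ κ / κ :=
    Real.log_le_rpow_div (by positivity) hκ
  have h2 : s ^ κ * ((1/s) ^ κ / κ) = 1/κ := by
    rw [mul_div_assoc', ← Real.mul_rpow hs.le (by positivity), mul_one_div,
      div_self hs.ne', Real.one_rpow]
  calc s ^ κ * Real.log (1/s) ≤ s ^ κ * ((1/s) ^ κ / κ) :=
        mul_le_mul_of_nonneg_left h1 (by positivity)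
    _ = 1/κ := h2

lemma myL2 {w R η : ℝ} (hw : 1 ≤ w) (hR : 0 ≤ R) (hη : 0 < η) :
    (Real.log w) ^ R ≤ (η/(R+1)) ^ (-R) * w ^ η := by
  have hw0 : (0:ℝ) < w := lt_of_lt_of_le one_pos hw
  have hlw : 0 ≤ Real.log w := Real.log_nonneg hw
  set η' := η/(R+1) with hη'
  have hη'0 : 0 < η' := by positivity
  have h1 : Real.log w ≤ w ^ η' / η' := Real.log_le_rpow_div hw0.le hη'0
  have h2 : (Real.log w) ^ R ≤ (w ^ η' / η') ^ R := Real.rpow_le_rpow hlw h1 hR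
  have h3 : (w ^ η' / η') ^ R = w ^ (η'*R) / η' ^ R := by
    rw [Real.div_rpow (by positivity) hη'0.le, ← Real.rpow_mul hw0.le]
  have h4 : w ^ (η'*R) ≤ w ^ η := by
    apply Real.rpow_le_rpow_of_exponent_le hw
    rw [hη', div_mul_eq_mul_div, div_le_iff₀ (by positivity)]
    nlinarith
  have h5 : η' ^ (-R) = (η' ^ R)⁻¹ := Real.rpow_neg hη'0.le R
  calc (Real.log w) ^ R ≤ w ^ (η'*R) / η' ^ R := h2.trans h3.le
    _ ≤ w ^ η / η' ^ R := by gcongr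
    _ = η' ^ (-R) * w ^ η := by rw [h5]; ring

lemma myLB {t₀ T t e Δ : ℝ} (h0 : 0 < t₀) (h01 : t₀ ≤ 1) (hT : 1 ≤ T)
    (ht1 : t₀ ≤ t) (ht2 : t ≤ T) (he : |e| ≤ Δ) :
    t ^ e ≤ t₀ ^ (-Δ) * T ^ Δ := by
  have ht0 : 0 < t := lt_of_lt_of_le h0 ht1
  have hΔ : 0 ≤ Δ := le_trans (abs_nonneg e) he
  have hone : (1:ℝ) ≤ t₀ ^ (-Δ) := by
    calc (1:ℝ) = t₀ ^ (0:ℝ) := (Real.rpow_zero t₀).symm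
    _ ≤ t₀ ^ (-Δ) := Real.rpow_le_rpow_of_exponent_ge h0 h01 (neg_nonpos.mpr hΔ)
  have honeT : (1:ℝ) ≤ T ^ Δ := Real.one_le_rpow hT hΔ
  rcases le_total 1 t with h | h
  · have b1 : t ^ e ≤ t ^ |e| := Real.rpow_le_rpow_of_exponent_le h (le_abs_self e)
    have b2 : t ^ |e| ≤ T ^ |e| := Real.rpow_le_rpow (by positivity) ht2 (abs_nonneg e)
    have b3 : T ^ |e| ≤ T ^ Δ := Real.rpow_le_rpow_of_exponent_le hT he
    calc t ^ e ≤ T ^ Δ := le_trans b1 (le_trans b2 b3)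
      _ = 1 * T ^ Δ := (one_mul _).symm
      _ ≤ t₀ ^ (-Δ) * T ^ Δ := by gcongr
  · have b1 : t ^ e ≤ t ^ (-|e|) := Real.rpow_le_rpow_of_exponent_ge ht0 h (neg_abs_le e)
    have b2 : t ^ (-|e|) ≤ t₀ ^ (-|e|) := by
      rw [Real.rpow_neg ht0.le, Real.rpow_neg h0.le]
      exact inv_anti₀ (by positivity) (Real.rpow_le_rpow h0.le ht1 (abs_nonneg e))
    have b3 : t₀ ^ (-|e|) ≤ t₀ ^ (-Δ) := Real.rpow_le_rpow_of_exponent_ge h0 h01 (neg_le_neg he)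
    calc t ^ e ≤ t₀ ^ (-Δ) := le_trans b1 (le_trans b2 b3)
      _ = t₀ ^ (-Δ) * 1 := (mul_one _).symm
      _ ≤ t₀ ^ (-Δ) * T ^ Δ := by gcongr

lemma myT {c α N cn ρ m : ℝ} (hc : 0 ≤ c) (hα : 0 < α) (hN : 0 < N) (hcn : 0 < cn)
    (hρ : 0 < ρ) (hm : m = ρ ^ N * cn) :
    m⁻¹ ^ (c * (2*ρ) ^ α) ≤ Real.exp (c * 2 ^ α * cn ^ (-(α/N)) * (N/α)) := by
  have hm0 : 0 < m := by rw [hm]; positivity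
  have hinv : 0 < m⁻¹ := by positivity
  have key : Real.log m⁻¹ * (c * (2*ρ) ^ α) ≤ c * 2 ^ α * cn ^ (-(α/N)) * (N/α) := by
    have hρα : ρ ^ α = m ^ (α/N) * cn ^ (-(α/N)) := by
      have h1 : m ^ (α/N) = ρ ^ α * cn ^ (α/N) := by
        rw [hm, Real.mul_rpow (by positivity) hcn.le, ← Real.rpow_mul hρ.le]
        congr 2
        field_simp
      rw [h1, mul_assoc, ← Real.rpow_add hcn, add_neg_cancel, Real.rpow_zero, mul_one]
    have hL1 : m ^ (α/N) * Real.log (1/m) ≤ N/α := by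
      have := myL1 (κ := α/N) (s := m) (by positivity) hm0
      rwa [one_div_div] at this
    have hlog : Real.log m⁻¹ = Real.log (1/m) := by rw [one_div]
    have h2ρ : (2*ρ) ^ α = 2 ^ α * ρ ^ α := Real.mul_rpow (by norm_num) hρ.le
    rw [hlog, h2ρ, hρα]
    have hnn : (0:ℝ) ≤ c * 2 ^ α * cn ^ (-(α/N)) := by positivity
    calc Real.log (1/m) * (c * (2 ^ α * (m ^ (α/N) * cn ^ (-(α/N)))))
        = (c * 2 ^ α * cn ^ (-(α/N))) * (m ^ (α/N) * Real.log (1/m)) := by ring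
      _ ≤ (c * 2 ^ α * cn ^ (-(α/N))) * (N/α) := mul_le_mul_of_nonneg_left hL1 hnn
  calc m⁻¹ ^ (c * (2*ρ) ^ α) = Real.exp (Real.log m⁻¹ * (c * (2*ρ) ^ α)) :=
        Real.rpow_def_of_pos hinv _
    _ ≤ _ := Real.exp_le_exp.mpr key

lemma one_le_logE {x : ℝ} (hx : 0 ≤ x) : 1 ≤ Real.log (Real.exp 1 + x) := by
  calc (1:ℝ) = Real.log (Real.exp 1) := (Real.log_exp 1).symm
    _ ≤ _ := Real.log_le_log (Real.exp_pos 1) (by linarith)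

lemma logE_le_two {x : ℝ} (hx0 : 0 ≤ x) (hx : x ≤ 1) :
    Real.log (Real.exp 1 + x) ≤ 2 := by
  rw [Real.log_le_iff_le_exp (by positivity)]
  have h := Real.exp_one_gt_d9
  have h2 : Real.exp 2 = Real.exp 1 * Real.exp 1 := by rw [← Real.exp_add]; norm_num
  nlinarith

set_option maxHeartbeats 1600000 in
/-- on a bounded domain, with `p, q` Hölder continuous, `a` `γ`-Hölder
continuous, `sup q/p < 1 + γ/n`, and `r` log-log-Hölder continuous, `Φ` satisfies
condition (A1)': there is `β ∈ (0,1)` with `Φ(x,βt) ≤ Φ(y,t)` for every ball `B` with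
`|B| ≤ 1`, all `x, y ∈ B ∩ Ω` and `t ≥ 0` with `1 ≤ Φ(y,t) ≤ 1/|B|`. -/
theorem stmt_6 {n : ℕ} (hn : 2 ≤ n)
    (Ω : Set (EuclideanSpace ℝ (Fin n))) (hΩo : IsOpen Ω) (hΩc : IsConnected Ω)
    (hΩb : Bornology.IsBounded Ω)
    (p q r a : EuclideanSpace ℝ (Fin n) → ℝ)
    (hp1 : ∀ x ∈ closure Ω, 1 ≤ p x) (hq1 : ∀ x ∈ closure Ω, 1 ≤ q x)
    (hpq : ∀ x ∈ closure Ω, p x ≤ q x)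
    (αp : ℝ) (hαp : αp ∈ Set.Ioc (0:ℝ) 1) (cp : ℝ) (hcp : 0 < cp)
    (hpH : ∀ x ∈ closure Ω, ∀ y ∈ closure Ω, |p x - p y| ≤ cp * dist x y ^ αp)
    (αq : ℝ) (hαq : αq ∈ Set.Ioc (0:ℝ) 1) (cq : ℝ) (hcq : 0 < cq)
    (hqH : ∀ x ∈ closure Ω, ∀ y ∈ closure Ω, |q x - q y| ≤ cq * dist x y ^ αq)
    (ha0 : ∀ x ∈ closure Ω, 0 ≤ a x)
    (γ : ℝ) (hγ : γ ∈ Set.Ioc (0:ℝ) 1) (ca : ℝ) (hca : 0 < ca)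
    (haH : ∀ x ∈ closure Ω, ∀ y ∈ closure Ω, |a x - a y| ≤ ca * dist x y ^ γ)
    (hqp : sSup ((fun x => q x / p x) '' closure Ω) < 1 + γ / n)
    (hr0 : ∀ x ∈ closure Ω, 0 ≤ r x)
    (Cr : ℝ) (hCr : 0 < Cr)
    (hrH : ∀ x ∈ closure Ω, ∀ y ∈ closure Ω, x ≠ y →
      |r x - r y| ≤ Cr / Real.log (Real.exp 1 + Real.log (Real.exp 1 + 1 / dist x y))) :
    ∃ β : ℝ, 0 < β ∧ β < 1 ∧
      ∀ (z : EuclideanSpace ℝ (Fin n)) (ρ : ℝ), 0 < ρ →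
        volume (Metric.ball z ρ) ≤ 1 →
        ∀ x ∈ Metric.ball z ρ ∩ Ω, ∀ y ∈ Metric.ball z ρ ∩ Ω,
          ∀ t : ℝ, 0 ≤ t → 1 ≤ Phi p q r a y t →
            Phi p q r a y t ≤ 1 / (volume (Metric.ball z ρ)).toReal →
            Phi p q r a x (β * t) ≤ Phi p q r a y t := by
  classical
  obtain ⟨x₀, hx₀Ω⟩ := hΩc.nonempty
  have hx₀ : x₀ ∈ closure Ω := subset_closure hx₀Ω
  obtain ⟨D, hD⟩ := Metric.isBounded_iff.mp hΩb.closure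
  have hD0 : 0 ≤ D := le_trans dist_nonneg (hD hx₀ hx₀)
  obtain ⟨hαp0, hαp1⟩ := hαp
  obtain ⟨hαq0, hαq1⟩ := hαq
  obtain ⟨hγ0, hγ1⟩ := hγ
  -- upper bounds for p, q, a, r
  set P := p x₀ + cp * D ^ αp with hPdef
  have hPb : ∀ x ∈ closure Ω, p x ≤ P := by
    intro x hx
    have h1 := (abs_le.mp (hpH x hx x₀ hx₀)).2
    have h2 : dist x x₀ ^ αp ≤ D ^ αp :=
      Real.rpow_le_rpow dist_nonneg (hD hx hx₀) hαp0.le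
    nlinarith
  have hP1 : 1 ≤ P := le_trans (hp1 x₀ hx₀) (hPb x₀ hx₀)
  set Q := q x₀ + cq * D ^ αq with hQdef
  have hQb : ∀ x ∈ closure Ω, q x ≤ Q := by
    intro x hx
    have h1 := (abs_le.mp (hqH x hx x₀ hx₀)).2
    have h2 : dist x x₀ ^ αq ≤ D ^ αq :=
      Real.rpow_le_rpow dist_nonneg (hD hx hx₀) hαq0.le
    nlinarith
  have hQ1 : 1 ≤ Q := le_trans (hq1 x₀ hx₀) (hQb x₀ hx₀)
  set A := a x₀ + ca * D ^ γ with hAdef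
  have hAb : ∀ x ∈ closure Ω, a x ≤ A := by
    intro x hx
    have h1 := (abs_le.mp (haH x hx x₀ hx₀)).2
    have h2 : dist x x₀ ^ γ ≤ D ^ γ :=
      Real.rpow_le_rpow dist_nonneg (hD hx hx₀) hγ0.le
    nlinarith
  have hA0 : 0 ≤ A := add_nonneg (ha0 x₀ hx₀) (by positivity)
  set R := r x₀ + Cr with hRdef
  have hRb : ∀ x ∈ closure Ω, r x ≤ R := by
    intro x hx
    by_cases hxx : x = x₀
    · rw [hxx]; linarith
    · have h1 := (abs_le.mp (hrH x hx x₀ hx₀ hxx)).2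
      have hd : 0 < dist x x₀ := dist_pos.mpr hxx
      have hG : 1 ≤ Real.log (Real.exp 1 + Real.log (Real.exp 1 + 1 / dist x x₀)) :=
        one_le_logE (by linarith [one_le_logE (le_of_lt (by positivity : (0:ℝ) < 1 / dist x x₀))])
      have h2 : Cr / Real.log (Real.exp 1 + Real.log (Real.exp 1 + 1 / dist x x₀)) ≤ Cr :=
        div_le_self hCr.le hG
      linarith
  have hR0 : 0 ≤ R := by linarith [hr0 x₀ hx₀]
  -- sigma and delta
  set σ := sSup ((fun x => q x / p x) '' closure Ω) with hσdef
  have hSbdd : BddAbove ((fun x => q x / p x) '' closure Ω) := by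
    refine ⟨Q, ?_⟩
    rintro v ⟨x, hx, rfl⟩
    calc q x / p x ≤ q x := div_le_self (by linarith [hq1 x hx]) (hp1 x hx)
      _ ≤ Q := hQb x hx
  have hσx : ∀ x ∈ closure Ω, q x ≤ σ * p x := by
    intro x hx
    have h := le_csSup hSbdd ⟨x, hx, rfl⟩
    have hp0 : (0:ℝ) < p x := lt_of_lt_of_le one_pos (hp1 x hx)
    calc q x = q x / p x * p x := by field_simp
      _ ≤ σ * p x := mul_le_mul_of_nonneg_right h hp0.le
  have hσ1 : 1 ≤ σ := by
    have h := le_csSup hSbdd ⟨x₀, hx₀, rfl⟩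
    have hp0 : (0:ℝ) < p x₀ := lt_of_lt_of_le one_pos (hp1 x₀ hx₀)
    have : (1:ℝ) ≤ q x₀ / p x₀ := (one_le_div hp0).mpr (hpq x₀ hx₀)
    linarith
  set Nr : ℝ := (n:ℝ) with hNrdef
  have hNr2 : (2:ℝ) ≤ Nr := by rw [hNrdef]; exact_mod_cast hn
  have hNr0 : (0:ℝ) < Nr := by linarith
  set δ := γ - Nr * (σ - 1) with hδdef
  have hδ0 : 0 < δ := by
    have h : σ < 1 + γ / Nr := hqp
    have h2 : σ - 1 < γ / Nr := by linarith
    have h3 : Nr * (σ - 1) < γ := by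
      calc Nr * (σ - 1) < Nr * (γ / Nr) := mul_lt_mul_of_pos_left h2 hNr0
        _ = γ := by field_simp
    linarith
  -- measure constants
  haveI : Nontrivial (EuclideanSpace ℝ (Fin n)) := by
    have : NeZero n := ⟨by omega⟩
    infer_instance
  set cn := (volume (Metric.ball (0:EuclideanSpace ℝ (Fin n)) 1)).toReal with hcndef
  have hcn : 0 < cn :=
    ENNReal.toReal_pos (Metric.measure_ball_pos volume 0 one_pos).ne' measure_ball_lt_top.ne
  set ρmax := cn⁻¹ ^ Nr⁻¹ with hρmaxdef
  have hρmax0 : 0 < ρmax := by positivity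
  set t₀ := (1 + A * (2:ℝ) ^ R)⁻¹ with ht₀def
  have h2R0 : (0:ℝ) < 2 ^ R := Real.rpow_pos_of_pos two_pos R
  have hden1 : (1:ℝ) ≤ 1 + A * 2 ^ R := by nlinarith
  have ht₀0 : 0 < t₀ := by rw [ht₀def]; positivity
  have ht₀1 : t₀ ≤ 1 := by
    rw [ht₀def]
    exact inv_le_one_of_one_le₀ hden1
  set η := δ / (2 * Nr) with hηdef
  have hη0 : 0 < η := by positivity
  set M₁ := Real.exp (cp * 2 ^ αp * cn ^ (-(αp/Nr)) * (Nr/αp)) with hM₁def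
  set M₂ := Real.exp (cq * 2 ^ αq * cn ^ (-(αq/Nr)) * (Nr/αq)) with hM₂def
  set M₅ := Real.exp ((σ*cp) * 2 ^ αp * cn ^ (-(αp/Nr)) * (Nr/αp)) with hM₅def
  set c₈ := Real.log (Real.exp 1 + 1) + |Real.log cn| + Nr * Real.log 2 with hc₈def
  have hc₈0 : 0 ≤ c₈ := by
    have h1 : 0 ≤ Real.log (Real.exp 1 + 1) := Real.log_nonneg (by linarith [Real.exp_pos 1])
    have h2 : 0 ≤ Real.log 2 := Real.log_nonneg one_le_two
    have h3 : 0 ≤ |Real.log cn| := abs_nonneg _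
    have h4 : 0 ≤ Nr * Real.log 2 := mul_nonneg hNr0.le h2
    rw [hc₈def]
    linarith
  set M₃ := Real.exp (Cr * (|Real.log (c₈ + Nr)| + 1)) with hM₃def
  set CL := (η/(R+1)) ^ (-R) * (Real.exp 1 + 1) ^ η with hCLdef
  have hCL0 : 0 < CL := by
    have : (0:ℝ) < η/(R+1) := by positivity
    have := Real.exp_pos 1
    positivity
  set M₄a := ca * (2*ρmax) ^ γ * t₀ ^ (-(Q+P)) * (2:ℝ) ^ R with hM₄adef
  have hM₄a0 : 0 < M₄a := by
    have h1 : (0:ℝ) < (2*ρmax) ^ γ := Real.rpow_pos_of_pos (by linarith) γ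
    have h2 : (0:ℝ) < t₀ ^ (-(Q+P)) := Real.rpow_pos_of_pos ht₀0 _
    positivity
  set M₄b := ca * 2 ^ γ * cn ^ (-(σ-1+η)) * ρmax ^ (δ/2) * M₅ * CL with hM₄bdef
  set B1 := t₀ ^ (-(cp*(2*ρmax) ^ αp)) * M₁ with hB1def
  have hB1 : 0 < B1 := mul_pos (Real.rpow_pos_of_pos ht₀0 _) (Real.exp_pos _)
  set B2 := t₀ ^ (-(cq*(2*ρmax) ^ αq)) * M₂ * M₃ with hB2def
  have hB2 : 0 < B2 :=
    mul_pos (mul_pos (Real.rpow_pos_of_pos ht₀0 _) (Real.exp_pos _)) (Real.exp_pos _)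
  set B4 := max M₄a M₄b with hB4def
  have hB4 : 0 < B4 := lt_of_lt_of_le hM₄a0 (le_max_left _ _)
  set β := min (min ((2*B1)⁻¹) B2⁻¹) (min ((2*B4)⁻¹) 2⁻¹) with hβdef
  have hβ0 : 0 < β := by
    apply lt_min (lt_min _ _) (lt_min _ _) <;> positivity
  have hβ1 : β ≤ 1 := le_trans (min_le_right _ _) (le_trans (min_le_right _ _) (by norm_num))
  have hβlt1 : β < 1 := lt_of_le_of_lt (le_trans (min_le_right _ _) (min_le_right _ _)) (by norm_num)
  have hβB1 : β * B1 ≤ 1/2 := by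
    have h : β ≤ (2*B1)⁻¹ := le_trans (min_le_left _ _) (min_le_left _ _)
    calc β * B1 ≤ (2*B1)⁻¹ * B1 := by gcongr
      _ = 1/2 := by field_simp
  have hβB2 : β * B2 ≤ 1 := by
    have h : β ≤ B2⁻¹ := le_trans (min_le_left _ _) (min_le_right _ _)
    calc β * B2 ≤ B2⁻¹ * B2 := by gcongr
      _ = 1 := inv_mul_cancel₀ hB2.ne'
  have hβB4 : β * B4 ≤ 1/2 := by
    have h : β ≤ (2*B4)⁻¹ := le_trans (min_le_right _ _) (min_le_left _ _)
    calc β * B4 ≤ (2*B4)⁻¹ * B4 := by gcongr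
      _ = 1/2 := by field_simp
  refine ⟨β, hβ0, hβlt1, ?_⟩
  intro z ρ hρ hvol x hxmem y hymem t ht hΦ1 hΦ2
  obtain ⟨hxB, hxΩ⟩ := hxmem
  obtain ⟨hyB, hyΩ⟩ := hymem
  have hxK : x ∈ closure Ω := subset_closure hxΩ
  have hyK : y ∈ closure Ω := subset_closure hyΩ
  have hpx1 := hp1 x hxK
  have hpy1 := hp1 y hyK
  have hqx1 := hq1 x hxK
  have hqy1 := hq1 y hyK
  have hrx0 := hr0 x hxK
  have hry0 := hr0 y hyK
  have hay0 := ha0 y hyK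
  have hpxP := hPb x hxK
  have hpyP := hPb y hyK
  have hqxQ := hQb x hxK
  have hqyQ := hQb y hyK
  have hrxR := hRb x hxK
  have hryR := hRb y hyK
  -- measure facts
  set m := (volume (Metric.ball z ρ)).toReal with hmdef
  have hmeq : m = ρ ^ Nr * cn := by
    rw [hmdef, MeasureTheory.Measure.addHaar_ball volume z hρ.le, finrank_euclideanSpace_fin,
      ENNReal.toReal_mul, ENNReal.toReal_ofReal (by positivity), hcndef, hNrdef,
      Real.rpow_natCast]
  have hm0 : 0 < m := by rw [hmeq]; positivity
  have hm1 : m ≤ 1 := by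
    rw [hmdef]
    calc (volume (Metric.ball z ρ)).toReal ≤ (1:ℝ≥0∞).toReal :=
          ENNReal.toReal_mono (by norm_num) hvol
      _ = 1 := by norm_num
  have hminv1 : 1 ≤ m⁻¹ := one_le_inv_iff₀.mpr ⟨hm0, hm1⟩
  have hρρmax : ρ ≤ ρmax := by
    have h1 : ρ ^ Nr ≤ cn⁻¹ := by
      rw [inv_eq_one_div, le_div_iff₀ hcn]
      rw [hmeq] at hm1
      exact hm1
    calc ρ = (ρ ^ Nr) ^ Nr⁻¹ := by
          rw [← Real.rpow_mul hρ.le, mul_inv_cancel₀ hNr0.ne', Real.rpow_one]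
      _ ≤ (cn⁻¹) ^ Nr⁻¹ := Real.rpow_le_rpow (by positivity) h1 (by positivity)
      _ = ρmax := hρmaxdef.symm
  -- geometry
  have hd2ρ : dist x y ≤ 2 * ρ := by
    have h1 := Metric.mem_ball.mp hxB
    have h2 := Metric.mem_ball.mp hyB
    calc dist x y ≤ dist x z + dist z y := dist_triangle x z y
      _ = dist x z + dist y z := by rw [dist_comm z y]
      _ ≤ 2 * ρ := by linarith
  set d := dist x y with hddef
  have hd0 : (0:ℝ) ≤ d := dist_nonneg
  have hd2ρmax : d ≤ 2 * ρmax := by linarith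
  -- t facts
  set L := Real.log (Real.exp 1 + t) with hLdef
  have hL1 : 1 ≤ L := one_le_logE ht
  have hL0 : 0 < L := by linarith
  have hPhiy : Phi p q r a y t = t ^ p y + a y * t ^ q y * L ^ r y := rfl
  have ht0 : 0 < t := by
    rcases lt_or_eq_of_le ht with h | h
    · exact h
    · exfalso
      have hz : Phi p q r a y t = 0 := by
        simp only [Phi, ← h, Real.zero_rpow (by linarith : p y ≠ 0),
          Real.zero_rpow (by linarith : q y ≠ 0)]
        ring
      rw [hz] at hΦ1; linarith
  have hsec : 0 ≤ a y * t ^ q y * L ^ r y :=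
    mul_nonneg (mul_nonneg hay0 (Real.rpow_nonneg ht _)) (Real.rpow_nonneg hL0.le _)
  have hty : t ^ p y ≤ m⁻¹ := by
    rw [hPhiy, one_div] at hΦ2
    linarith
  set T := m⁻¹ ^ (p y)⁻¹ with hTdef
  have hT1 : 1 ≤ T := Real.one_le_rpow hminv1 (by positivity)
  have hT0 : (0:ℝ) < T := by linarith
  have htT : t ≤ T := by
    calc t = (t ^ p y) ^ (p y)⁻¹ := by
          rw [← Real.rpow_mul ht, mul_inv_cancel₀ (by linarith : p y ≠ 0), Real.rpow_one]
      _ ≤ m⁻¹ ^ (p y)⁻¹ := Real.rpow_le_rpow (Real.rpow_nonneg ht _) hty (by positivity)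
  have htt₀ : t₀ ≤ t := by
    rcases le_total 1 t with h | h
    · linarith
    · have h1 : t ^ p y ≤ t := by
        calc t ^ p y ≤ t ^ (1:ℝ) := Real.rpow_le_rpow_of_exponent_ge ht0 h hpy1
          _ = t := Real.rpow_one t
      have h2 : t ^ q y ≤ t := by
        calc t ^ q y ≤ t ^ (1:ℝ) := Real.rpow_le_rpow_of_exponent_ge ht0 h hqy1
          _ = t := Real.rpow_one t
      have hL2 : L ≤ 2 := logE_le_two ht h
      have h3 : L ^ r y ≤ 2 ^ R := by
        calc L ^ r y ≤ 2 ^ r y := Real.rpow_le_rpow hL0.le hL2 hry0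
          _ ≤ 2 ^ R := Real.rpow_le_rpow_of_exponent_le one_le_two hryR
      have h4 : a y * t ^ q y * L ^ r y ≤ A * t * 2 ^ R := by
        have hq0 : 0 ≤ t ^ q y := Real.rpow_nonneg ht _
        have hLr0 : 0 ≤ L ^ r y := Real.rpow_nonneg hL0.le _
        apply mul_le_mul (mul_le_mul (hAb y hyK) h2 hq0 hA0) h3 hLr0
          (mul_nonneg hA0 ht)
      have h5 : (1:ℝ) ≤ t * (1 + A * 2 ^ R) := by
        rw [hPhiy] at hΦ1
        linarith
      have hc : (0:ℝ) < 1 + A * 2 ^ R := by linarith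
      rw [ht₀def]
      calc (1 + A * 2 ^ R)⁻¹ = (1 + A * 2 ^ R)⁻¹ * 1 := (mul_one _).symm
        _ ≤ (1 + A * 2 ^ R)⁻¹ * (t * (1 + A * 2 ^ R)) :=
            mul_le_mul_of_nonneg_left h5 (by positivity)
        _ = t := by field_simp
  -- the key exponent bound
  have key1 : ∀ c α e : ℝ, 0 ≤ c → 0 < α → |e| ≤ c * d ^ α →
      t ^ e ≤ t₀ ^ (-(c*(2*ρmax) ^ α)) * Real.exp (c * 2 ^ α * cn ^ (-(α/Nr)) * (Nr/α)) := by
    intro c α e hc hα he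
    have hda : (0:ℝ) ≤ d ^ α := Real.rpow_nonneg hd0 _
    have h1 : t ^ e ≤ t₀ ^ (-(c*d^α)) * T ^ (c*d^α) := myLB ht₀0 ht₀1 hT1 htt₀ htT he
    have hdd : c * d ^ α ≤ c * (2*ρmax) ^ α := by
      have hh : d ^ α ≤ (2*ρmax) ^ α := Real.rpow_le_rpow hd0 (by linarith) hα.le
      exact mul_le_mul_of_nonneg_left hh hc
    have h2 : t₀ ^ (-(c*d^α)) ≤ t₀ ^ (-(c*(2*ρmax)^α)) :=
      Real.rpow_le_rpow_of_exponent_ge ht₀0 ht₀1 (neg_le_neg hdd)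
    have h3 : T ^ (c*d^α) ≤ Real.exp (c * 2 ^ α * cn ^ (-(α/Nr)) * (Nr/α)) := by
      have e1 : T ^ (c*d^α) = m⁻¹ ^ ((p y)⁻¹ * (c*d^α)) := by
        rw [hTdef, ← Real.rpow_mul (by positivity)]
      have e2 : m⁻¹ ^ ((p y)⁻¹ * (c*d^α)) ≤ m⁻¹ ^ (c*(2*ρ)^α) := by
        apply Real.rpow_le_rpow_of_exponent_le hminv1
        have i1 : (p y)⁻¹ ≤ 1 := inv_le_one_of_one_le₀ hpy1
        have i2 : d ^ α ≤ (2*ρ) ^ α := Real.rpow_le_rpow hd0 hd2ρ hα.le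
        have i3 : 0 ≤ c * d ^ α := mul_nonneg hc hda
        have i4 : 0 ≤ (p y)⁻¹ := by positivity
        have i5 : (p y)⁻¹ * (c * d ^ α) ≤ 1 * (c * d ^ α) :=
          mul_le_mul_of_nonneg_right i1 i3
        have i6 : c * d ^ α ≤ c * (2*ρ) ^ α := mul_le_mul_of_nonneg_left i2 hc
        linarith
      rw [e1]
      exact e2.trans (myT hc hα hNr0 hcn hρ hmeq)
    calc t ^ e ≤ t₀ ^ (-(c*d^α)) * T ^ (c*d^α) := h1
      _ ≤ _ := mul_le_mul h2 h3 (Real.rpow_nonneg hT0.le _) (Real.rpow_nonneg ht₀0.le _)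
  have S1 : t ^ (p x - p y) ≤ B1 := key1 cp αp _ hcp.le hαp0 (hpH x hxK y hyK)
  have S2 : t ^ (q x - q y) ≤ t₀ ^ (-(cq*(2*ρmax) ^ αq)) * M₂ :=
    key1 cq αq _ hcq.le hαq0 (hqH x hxK y hyK)
  -- log bounds
  set LT := Real.log (Real.exp 1 + T) with hLTdef
  have hLT1 : 1 ≤ LT := one_le_logE (by linarith)
  have hLT0 : (0:ℝ) < LT := by linarith
  have hLLT : L ≤ LT := Real.log_le_log (by positivity) (by linarith)
  have hTm : T ≤ m⁻¹ := by
    calc T = m⁻¹ ^ (p y)⁻¹ := rfl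
      _ ≤ m⁻¹ ^ (1:ℝ) :=
          Real.rpow_le_rpow_of_exponent_le hminv1 (inv_le_one_of_one_le₀ hpy1)
      _ = m⁻¹ := Real.rpow_one _
  have hexp1 : (0:ℝ) < Real.exp 1 := Real.exp_pos 1
  have hLTbound : LT ≤ (c₈ + Nr) * Real.log (Real.exp 1 + 1/(2*ρ)) := by
    set G₀ := Real.log (Real.exp 1 + 1/(2*ρ)) with hG₀def
    have hG₀1 : 1 ≤ G₀ := one_le_logE (by positivity)
    have h1 : LT ≤ Real.log ((Real.exp 1 + 1) * m⁻¹) := by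
      apply Real.log_le_log (by positivity)
      have hh : Real.exp 1 * 1 ≤ Real.exp 1 * m⁻¹ :=
        mul_le_mul_of_nonneg_left hminv1 hexp1.le
      linarith [hTm]
    have h2 : Real.log ((Real.exp 1 + 1) * m⁻¹)
        = Real.log (Real.exp 1 + 1) + Real.log m⁻¹ :=
      Real.log_mul (by positivity) (by positivity)
    have h3 : Real.log m⁻¹ = -(Real.log cn + Nr * Real.log ρ) := by
      rw [Real.log_inv, hmeq, Real.log_mul (by positivity) hcn.ne', Real.log_rpow hρ]
      ring
    have h4 : -Real.log ρ ≤ Real.log 2 + G₀ := by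
      have hh : Real.log (1/(2*ρ)) ≤ G₀ := Real.log_le_log (by positivity) (by linarith)
      rw [one_div, Real.log_inv, Real.log_mul two_ne_zero hρ.ne'] at hh
      linarith
    have h5 : -Real.log cn ≤ |Real.log cn| := neg_le_abs _
    have h6 : LT ≤ c₈ + Nr * G₀ := by
      rw [h2, h3] at h1
      have h7 : Nr * (-Real.log ρ) ≤ Nr * (Real.log 2 + G₀) :=
        mul_le_mul_of_nonneg_left h4 hNr0.le
      rw [hc₈def]
      linarith
    have h8 : c₈ * 1 ≤ c₈ * G₀ := mul_le_mul_of_nonneg_left hG₀1 hc₈0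
    linarith [h8]
  have S3 : L ^ (r x - r y) ≤ M₃ := by
    have hstep : L ^ (r x - r y) ≤ LT ^ |r x - r y| := by
      have hh := myLB (t₀ := 1) (T := LT) (t := L) (e := r x - r y) (Δ := |r x - r y|)
        one_pos le_rfl hLT1 hL1 hLLT le_rfl
      simpa using hh
    refine hstep.trans ?_
    by_cases hxy : x = y
    · rw [hxy]
      simp only [sub_self, abs_zero, Real.rpow_zero]
      exact Real.one_le_exp (by positivity)
    · have hdpos : 0 < d := dist_pos.mpr hxy
      have hΔr := hrH x hxK y hyK hxy
      set Gd := Real.log (Real.exp 1 + Real.log (Real.exp 1 + 1/d)) with hGddef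
      have hin : (1:ℝ) ≤ Real.log (Real.exp 1 + 1/d) := one_le_logE (by positivity)
      have hGd1 : 1 ≤ Gd := one_le_logE (by linarith)
      set G₀ := Real.log (Real.exp 1 + 1/(2*ρ)) with hG₀def
      have hG₀1 : (1:ℝ) ≤ G₀ := one_le_logE (by positivity)
      have hG₀0 : (0:ℝ) < G₀ := by linarith
      have hGρ : Real.log (Real.exp 1 + G₀) ≤ Gd := by
        apply Real.log_le_log (by positivity)
        have h7 : 1/(2*ρ) ≤ 1/d := one_div_le_one_div_of_le hdpos hd2ρ
        have h8 : G₀ ≤ Real.log (Real.exp 1 + 1/d) := Real.log_le_log (by positivity) (by linarith)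
        linarith
      have hc₈Nr : (0:ℝ) < c₈ + Nr := by linarith
      have hlogLT : Real.log LT ≤ Real.log (c₈ + Nr) + Real.log (Real.exp 1 + G₀) := by
        have h9 : Real.log LT ≤ Real.log ((c₈+Nr)*G₀) := Real.log_le_log hLT0 hLTbound
        rw [Real.log_mul hc₈Nr.ne' hG₀0.ne'] at h9
        have h10 : Real.log G₀ ≤ Real.log (Real.exp 1 + G₀) :=
          Real.log_le_log hG₀0 (by linarith)
        linarith
      have hlogc : 0 ≤ Real.log (c₈ + Nr) := Real.log_nonneg (by linarith)
      have hGe0 : 0 ≤ Real.log (Real.exp 1 + G₀) := Real.log_nonneg (by linarith)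
      have hGdpos : (0:ℝ) < Gd := by linarith
      have hfinal : Real.log LT * |r x - r y| ≤ Cr * (|Real.log (c₈ + Nr)| + 1) := by
        have h11 : Real.log LT * |r x - r y|
            ≤ (Real.log (c₈+Nr) + Real.log (Real.exp 1 + G₀)) * (Cr/Gd) :=
          mul_le_mul hlogLT hΔr (abs_nonneg _) (add_nonneg hlogc hGe0)
        have key : (Real.log (c₈+Nr) + Real.log (Real.exp 1 + G₀)) / Gd
            ≤ Real.log (c₈+Nr) + 1 := by
          rw [div_le_iff₀ hGdpos]
          have k1 : Real.log (c₈+Nr) * 1 ≤ Real.log (c₈+Nr) * Gd :=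
            mul_le_mul_of_nonneg_left hGd1 hlogc
          linarith [k1, hGρ]
        have h12 : (Real.log (c₈+Nr) + Real.log (Real.exp 1 + G₀)) * (Cr/Gd)
            ≤ Cr * (Real.log (c₈+Nr) + 1) := by
          calc (Real.log (c₈+Nr) + Real.log (Real.exp 1 + G₀)) * (Cr/Gd)
              = Cr * ((Real.log (c₈+Nr) + Real.log (Real.exp 1 + G₀)) / Gd) := by ring
            _ ≤ Cr * (Real.log (c₈+Nr) + 1) := mul_le_mul_of_nonneg_left key hCr.le
        rw [abs_of_nonneg hlogc]
        linarith
      calc LT ^ |r x - r y| = Real.exp (Real.log LT * |r x - r y|) :=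
            Real.rpow_def_of_pos hLT0 _
        _ ≤ M₃ := Real.exp_le_exp.mpr hfinal
  -- the (2b) core bound
  have hcaρ : (0:ℝ) ≤ ca * (2*ρ) ^ γ := mul_nonneg hca.le (Real.rpow_nonneg (by positivity) _)
  have S4 : ca * (2*ρ) ^ γ * (t ^ (q x - p y) * L ^ r x) ≤ B4 := by
    rcases le_total t 1 with h | h
    · have he : |q x - p y| ≤ Q + P := by
        rw [abs_le]
        constructor <;> [linarith; linarith]
      have h1 : t ^ (q x - p y) ≤ t₀ ^ (-(Q+P)) := by
        have hh := myLB ht₀0 ht₀1 le_rfl htt₀ h he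
        simpa using hh
      have hL2 : L ≤ 2 := logE_le_two ht h
      have h2 : L ^ r x ≤ 2 ^ R := by
        calc L ^ r x ≤ 2 ^ r x := Real.rpow_le_rpow hL0.le hL2 hrx0
          _ ≤ 2 ^ R := Real.rpow_le_rpow_of_exponent_le one_le_two hrxR
      have h3 : (2*ρ) ^ γ ≤ (2*ρmax) ^ γ :=
        Real.rpow_le_rpow (by positivity) (by linarith) hγ0.le
      calc ca * (2*ρ) ^ γ * (t ^ (q x - p y) * L ^ r x)
          ≤ ca * (2*ρmax) ^ γ * (t₀ ^ (-(Q+P)) * 2 ^ R) := by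
            apply mul_le_mul (mul_le_mul_of_nonneg_left h3 hca.le)
              (mul_le_mul h1 h2 (Real.rpow_nonneg hL0.le _) (Real.rpow_nonneg ht₀0.le _))
              (mul_nonneg (Real.rpow_nonneg ht0.le _) (Real.rpow_nonneg hL0.le _))
              (mul_nonneg hca.le (Real.rpow_nonneg (by positivity) _))
        _ = M₄a := by rw [hM₄adef]; ring
        _ ≤ B4 := le_max_left _ _
    · have hpy0 : (0:ℝ) < p y := by linarith
      have hda : (0:ℝ) ≤ d ^ αp := Real.rpow_nonneg hd0 _
      have hepos : (p y)⁻¹ * max (q x - p y) 0 ≤ (σ - 1) + σ * cp * d ^ αp := by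
        have hqσ := hσx x hxK
        have hpp : p x - p y ≤ cp * d ^ αp := (abs_le.mp (hpH x hxK y hyK)).2
        rcases le_total (q x - p y) 0 with hle | hle
        · rw [max_eq_right hle, mul_zero]
          have m0 : 0 ≤ σ * cp * d ^ αp :=
            mul_nonneg (mul_nonneg (by linarith) hcp.le) hda
          linarith
        · rw [max_eq_left hle, inv_mul_eq_div, div_le_iff₀ hpy0]
          have m1 : σ * (p x - p y) ≤ σ * (cp * d ^ αp) :=
            mul_le_mul_of_nonneg_left hpp (by linarith)
          have m2 : 0 ≤ σ * cp * d ^ αp * (p y - 1) :=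
            mul_nonneg (mul_nonneg (mul_nonneg (by linarith) hcp.le) hda) (by linarith)
          linarith [hqσ, m1, m2]
      have h1 : t ^ (q x - p y) ≤ m⁻¹ ^ (σ - 1) * M₅ := by
        have s1 : t ^ (q x - p y) ≤ t ^ max (q x - p y) 0 :=
          Real.rpow_le_rpow_of_exponent_le h (le_max_left _ _)
        have s2 : t ^ max (q x - p y) 0 ≤ T ^ max (q x - p y) 0 :=
          Real.rpow_le_rpow ht0.le htT (le_max_right _ _)
        have s3 : T ^ max (q x - p y) 0 = m⁻¹ ^ ((p y)⁻¹ * max (q x - p y) 0) := by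
          rw [hTdef, ← Real.rpow_mul (by positivity)]
        have s4 : m⁻¹ ^ ((p y)⁻¹ * max (q x - p y) 0)
            ≤ m⁻¹ ^ ((σ-1) + (σ*cp)*(2*ρ) ^ αp) := by
          apply Real.rpow_le_rpow_of_exponent_le hminv1
          refine hepos.trans ?_
          have hh : d ^ αp ≤ (2*ρ) ^ αp := Real.rpow_le_rpow hd0 hd2ρ hαp0.le
          have m1 : σ * cp * d ^ αp ≤ σ * cp * (2*ρ) ^ αp :=
            mul_le_mul_of_nonneg_left hh (mul_nonneg (by linarith) hcp.le)
          linarith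
        have s5 : m⁻¹ ^ ((σ-1) + (σ*cp)*(2*ρ) ^ αp)
            = m⁻¹ ^ (σ-1) * m⁻¹ ^ ((σ*cp)*(2*ρ) ^ αp) := Real.rpow_add (by positivity) _ _
        have s6 : m⁻¹ ^ ((σ*cp)*(2*ρ) ^ αp) ≤ M₅ :=
          myT (mul_nonneg (by linarith) hcp.le) hαp0 hNr0 hcn hρ hmeq
        calc t ^ (q x - p y) ≤ m⁻¹ ^ ((σ-1) + (σ*cp)*(2*ρ) ^ αp) :=
              s1.trans (s2.trans (s3 ▸ s4))
          _ = m⁻¹ ^ (σ-1) * m⁻¹ ^ ((σ*cp)*(2*ρ) ^ αp) := s5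
          _ ≤ m⁻¹ ^ (σ-1) * M₅ :=
              mul_le_mul_of_nonneg_left s6 (Real.rpow_nonneg (by positivity) _)
      have h2 : L ^ r x ≤ CL * m⁻¹ ^ η := by
        set w := (Real.exp 1 + 1) * m⁻¹ with hwdef
        have hw1 : 1 ≤ w := by
          have hh : 1 * m⁻¹ ≤ (Real.exp 1 + 1) * m⁻¹ :=
            mul_le_mul_of_nonneg_right (by linarith) (by positivity)
          rw [hwdef]; linarith
        have hLw : L ≤ Real.log w := by
          apply Real.log_le_log (by positivity)
          have hh : Real.exp 1 * 1 ≤ Real.exp 1 * m⁻¹ :=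
            mul_le_mul_of_nonneg_left hminv1 hexp1.le
          rw [hwdef]
          linarith [hTm, htT]
        have s1 : L ^ r x ≤ L ^ R := Real.rpow_le_rpow_of_exponent_le hL1 hrxR
        have s2 : L ^ R ≤ (Real.log w) ^ R := Real.rpow_le_rpow hL0.le hLw hR0
        have s3 : (Real.log w) ^ R ≤ (η/(R+1)) ^ (-R) * w ^ η := myL2 hw1 hR0 hη0
        have s4 : w ^ η = (Real.exp 1 + 1) ^ η * m⁻¹ ^ η :=
          Real.mul_rpow (by positivity) (by positivity)
        calc L ^ r x ≤ (η/(R+1)) ^ (-R) * w ^ η := s1.trans (s2.trans s3)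
          _ = (η/(R+1)) ^ (-R) * ((Real.exp 1 + 1) ^ η * m⁻¹ ^ η) := by rw [s4]
          _ = CL * m⁻¹ ^ η := by rw [hCLdef]; ring
      have h3 : ρ ^ γ * (m⁻¹ ^ (σ-1) * m⁻¹ ^ η) ≤ cn ^ (-(σ-1+η)) * ρmax ^ (δ/2) := by
        have e1 : m⁻¹ ^ (σ-1) * m⁻¹ ^ η = m⁻¹ ^ (σ-1+η) :=
          (Real.rpow_add (by positivity) _ _).symm
        have e2 : m⁻¹ ^ (σ-1+η) = cn ^ (-(σ-1+η)) * ρ ^ (-(Nr*(σ-1+η))) := by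
          rw [Real.inv_rpow hm0.le, ← Real.rpow_neg hm0.le, hmeq,
            Real.mul_rpow (by positivity) hcn.le, ← Real.rpow_mul hρ.le]
          ring_nf
        have e3 : ρ ^ γ * ρ ^ (-(Nr*(σ-1+η))) = ρ ^ (δ/2) := by
          rw [← Real.rpow_add hρ]
          congr 1
          rw [hδdef, hηdef]
          field_simp
          ring
        have e4 : ρ ^ (δ/2) ≤ ρmax ^ (δ/2) := Real.rpow_le_rpow hρ.le hρρmax (by positivity)
        calc ρ ^ γ * (m⁻¹ ^ (σ-1) * m⁻¹ ^ η)
            = cn ^ (-(σ-1+η)) * (ρ ^ γ * ρ ^ (-(Nr*(σ-1+η)))) := by rw [e1, e2]; ring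
          _ = cn ^ (-(σ-1+η)) * ρ ^ (δ/2) := by rw [e3]
          _ ≤ cn ^ (-(σ-1+η)) * ρmax ^ (δ/2) :=
              mul_le_mul_of_nonneg_left e4 (Real.rpow_nonneg hcn.le _)
      have h2ργ : (2*ρ) ^ γ = 2 ^ γ * ρ ^ γ := Real.mul_rpow (by norm_num) hρ.le
      have hM₅0 : (0:ℝ) < M₅ := Real.exp_pos _
      calc ca * (2*ρ) ^ γ * (t ^ (q x - p y) * L ^ r x)
          ≤ ca * (2*ρ) ^ γ * ((m⁻¹ ^ (σ-1) * M₅) * (CL * m⁻¹ ^ η)) := by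
            apply mul_le_mul_of_nonneg_left
              (mul_le_mul h1 h2 (Real.rpow_nonneg hL0.le _)
                (mul_nonneg (Real.rpow_nonneg (by positivity) _) hM₅0.le)) hcaρ
        _ = (ca * 2 ^ γ * M₅ * CL) * (ρ ^ γ * (m⁻¹ ^ (σ-1) * m⁻¹ ^ η)) := by
            rw [h2ργ]; ring
        _ ≤ (ca * 2 ^ γ * M₅ * CL) * (cn ^ (-(σ-1+η)) * ρmax ^ (δ/2)) := by
            apply mul_le_mul_of_nonneg_left h3
            have h2γ : (0:ℝ) ≤ (2:ℝ) ^ γ := Real.rpow_nonneg (by norm_num) _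
            positivity
        _ = M₄b := by rw [hM₄bdef]; ring
        _ ≤ B4 := le_max_right _ _
  -- final assembly
  set Lβ := Real.log (Real.exp 1 + β * t) with hLβdef
  have hβt0 : (0:ℝ) ≤ β * t := by positivity
  have hLβ1 : 1 ≤ Lβ := one_le_logE hβt0
  have hLβL : Lβ ≤ L := by
    have hh : β * t ≤ 1 * t := mul_le_mul_of_nonneg_right hβ1 ht
    exact Real.log_le_log (by positivity) (by linarith)
  have hβpow : ∀ s : ℝ, 1 ≤ s → β ^ s ≤ β := by
    intro s hs
    calc β ^ s ≤ β ^ (1:ℝ) := Real.rpow_le_rpow_of_exponent_ge hβ0 hβ1 hs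
      _ = β := Real.rpow_one β
  have term1 : (β*t) ^ p x ≤ 1/2 * t ^ p y := by
    have e1 : (β*t) ^ p x = β ^ p x * t ^ p x := Real.mul_rpow hβ0.le ht
    have e2 : t ^ p x = t ^ p y * t ^ (p x - p y) := by
      rw [← Real.rpow_add ht0]; congr 1; ring
    calc (β*t) ^ p x = β ^ p x * (t ^ p y * t ^ (p x - p y)) := by rw [e1, e2]
      _ ≤ β * (t ^ p y * B1) := by
          apply mul_le_mul (hβpow _ hpx1)
            (mul_le_mul_of_nonneg_left S1 (Real.rpow_nonneg ht0.le _))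
            (mul_nonneg (Real.rpow_nonneg ht0.le _) (Real.rpow_nonneg ht0.le _)) hβ0.le
      _ = (β * B1) * t ^ p y := by ring
      _ ≤ 1/2 * t ^ p y := mul_le_mul_of_nonneg_right hβB1 (Real.rpow_nonneg ht _)
  have core : (β*t) ^ q x * Lβ ^ r x ≤ β * (t ^ q x * L ^ r x) := by
    have e1 : (β*t) ^ q x = β ^ q x * t ^ q x := Real.mul_rpow hβ0.le ht
    have e2 : Lβ ^ r x ≤ L ^ r x := Real.rpow_le_rpow (by linarith) hLβL hrx0
    calc (β*t) ^ q x * Lβ ^ r x = β ^ q x * t ^ q x * Lβ ^ r x := by rw [e1]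
      _ ≤ β * t ^ q x * L ^ r x := by
          apply mul_le_mul
            (mul_le_mul (hβpow _ hqx1) le_rfl (Real.rpow_nonneg ht _) hβ0.le) e2
            (Real.rpow_nonneg (by linarith) _)
            (mul_nonneg hβ0.le (Real.rpow_nonneg ht _))
      _ = β * (t ^ q x * L ^ r x) := by ring
  have term2a : β * (t ^ q x * L ^ r x) ≤ t ^ q y * L ^ r y := by
    have e1 : t ^ q x = t ^ q y * t ^ (q x - q y) := by
      rw [← Real.rpow_add ht0]; congr 1; ring
    have e2 : L ^ r x = L ^ r y * L ^ (r x - r y) := by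
      rw [← Real.rpow_add hL0]; congr 1; ring
    have hMB2 : 0 ≤ t₀ ^ (-(cq*(2*ρmax) ^ αq)) * M₂ :=
      mul_nonneg (Real.rpow_nonneg ht₀0.le _) (Real.exp_pos _).le
    have hB2eq : (t₀ ^ (-(cq*(2*ρmax) ^ αq)) * M₂) * M₃ = B2 := by rw [hB2def]
    calc β * (t ^ q x * L ^ r x)
        = (β * (t ^ (q x - q y) * L ^ (r x - r y))) * (t ^ q y * L ^ r y) := by
          rw [e1, e2]; ring
      _ ≤ (β * B2) * (t ^ q y * L ^ r y) := by
          apply mul_le_mul_of_nonneg_right ?_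
            (mul_nonneg (Real.rpow_nonneg ht _) (Real.rpow_nonneg hL0.le _))
          rw [← hB2eq]
          apply mul_le_mul_of_nonneg_left ?_ hβ0.le
          exact mul_le_mul S2 S3 (Real.rpow_nonneg hL0.le _) hMB2
      _ ≤ 1 * (t ^ q y * L ^ r y) := by
          apply mul_le_mul_of_nonneg_right hβB2
            (mul_nonneg (Real.rpow_nonneg ht _) (Real.rpow_nonneg hL0.le _))
      _ = t ^ q y * L ^ r y := one_mul _
  have term2b : ca * d ^ γ * (β * (t ^ q x * L ^ r x)) ≤ 1/2 * t ^ p y := by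
    have e1 : t ^ q x = t ^ p y * t ^ (q x - p y) := by
      rw [← Real.rpow_add ht0]; congr 1; ring
    have e2 : ca * d ^ γ ≤ ca * (2*ρ) ^ γ :=
      mul_le_mul_of_nonneg_left (Real.rpow_le_rpow hd0 hd2ρ hγ0.le) hca.le
    have hXnn : 0 ≤ t ^ (q x - p y) * L ^ r x :=
      mul_nonneg (Real.rpow_nonneg ht0.le _) (Real.rpow_nonneg hL0.le _)
    calc ca * d ^ γ * (β * (t ^ q x * L ^ r x))
        = β * (ca * d ^ γ * (t ^ (q x - p y) * L ^ r x)) * t ^ p y := by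
          rw [e1]; ring
      _ ≤ β * (ca * (2*ρ) ^ γ * (t ^ (q x - p y) * L ^ r x)) * t ^ p y := by
          apply mul_le_mul_of_nonneg_right ?_ (Real.rpow_nonneg ht _)
          apply mul_le_mul_of_nonneg_left ?_ hβ0.le
          exact mul_le_mul_of_nonneg_right e2 hXnn
      _ ≤ β * B4 * t ^ p y := by
          apply mul_le_mul_of_nonneg_right ?_ (Real.rpow_nonneg ht _)
          exact mul_le_mul_of_nonneg_left S4 hβ0.le
      _ ≤ 1/2 * t ^ p y := mul_le_mul_of_nonneg_right hβB4 (Real.rpow_nonneg ht _)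
  have hax : a x ≤ a y + ca * d ^ γ := by
    have hh := (abs_le.mp (haH x hxK y hyK)).2
    linarith
  have hXnn2 : 0 ≤ (β*t) ^ q x * Lβ ^ r x :=
    mul_nonneg (Real.rpow_nonneg hβt0 _) (Real.rpow_nonneg (by linarith) _)
  have hcd0 : 0 ≤ ca * d ^ γ := mul_nonneg hca.le (Real.rpow_nonneg hd0 _)
  calc Phi p q r a x (β*t) = (β*t) ^ p x + a x * ((β*t) ^ q x * Lβ ^ r x) := by
        simp only [Phi, ← hLβdef]; ring
    _ ≤ 1/2 * t ^ p y + (a y + ca * d ^ γ) * ((β*t) ^ q x * Lβ ^ r x) :=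
        add_le_add term1 (mul_le_mul_of_nonneg_right hax hXnn2)
    _ = 1/2 * t ^ p y + a y * ((β*t) ^ q x * Lβ ^ r x)
        + ca * d ^ γ * ((β*t) ^ q x * Lβ ^ r x) := by ring
    _ ≤ 1/2 * t ^ p y + a y * (t ^ q y * L ^ r y) + 1/2 * t ^ p y := by
        apply add_le_add (add_le_add le_rfl ?_) ?_
        · exact mul_le_mul_of_nonneg_left (core.trans term2a) hay0
        · exact (mul_le_mul_of_nonneg_left core hcd0).trans term2b
    _ = t ^ p y + a y * t ^ q y * L ^ r y := by ring
    _ = Phi p q r a y t := hPhiy.symm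
end

section
/- Let Ω ⊆ ℝⁿ, let q : Ω → [1,∞) be bounded with q⁺ := sup_Ω q < ∞ and log-Hölder continuous, and let a : Ω → [0,∞) be bounded and q⁺-Hölder continuous, i.e. |a(x) − a(y)| ≤ c_a |x−y|^{q⁺} for all x, y ∈ Ω. Then there exists a constant C > 0 such that |a(x)^{1/q(x)} − a(y)^{1/q(y)}| ≤ C / log(e + 1/|x−y|) for all x, y ∈ Ω with 0 < |x−y| ≤ 1. -/
open MeasureTheory Set
open scoped ENNReal

lemma aux_xexp {x : ℝ} (hx : 0 ≤ x) : x * Real.exp (-x) ≤ (Real.exp 1)⁻¹ := by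
  have h1 : x ≤ Real.exp (x - 1) := by
    have := Real.add_one_le_exp (x - 1); linarith
  have h2 : Real.exp (x - 1) * Real.exp (-x) = (Real.exp 1)⁻¹ := by
    rw [← Real.exp_add]
    have : x - 1 + -x = -1 := by ring
    rw [this, Real.exp_neg]
  calc x * Real.exp (-x) ≤ Real.exp (x - 1) * Real.exp (-x) :=
        mul_le_mul_of_nonneg_right h1 (Real.exp_pos _).le
    _ = (Real.exp 1)⁻¹ := h2

lemma aux_add_rpow_le {x y α : ℝ} (hx : 0 ≤ x) (hy : 0 ≤ y) (hα : 0 < α) (hα1 : α ≤ 1) :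
    (x + y) ^ α ≤ x ^ α + y ^ α := by
  have hp : (1:ℝ) ≤ 1/α := by rw [le_div_iff₀ hα]; linarith
  have key : (x.toNNReal + y.toNNReal) ^ (α:ℝ) ≤ x.toNNReal ^ (α:ℝ) + y.toNNReal ^ (α:ℝ) := by
    have h := NNReal.rpow_add_rpow_le_add (x.toNNReal ^ (α:ℝ)) (y.toNNReal ^ (α:ℝ)) hp
    rwa [← NNReal.rpow_mul, ← NNReal.rpow_mul, mul_one_div_cancel hα.ne', NNReal.rpow_one,
      NNReal.rpow_one, one_div_one_div] at h
  have := NNReal.coe_le_coe.mpr key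
  push_cast [NNReal.coe_rpow, Real.coe_toNNReal _ hx, Real.coe_toNNReal _ hy] at this
  convert this using 2 <;> simp [Real.coe_toNNReal _ hx, Real.coe_toNNReal _ hy]

lemma aux_abs_rpow_sub {s t α : ℝ} (hs : 0 ≤ s) (ht : 0 ≤ t) (hα : 0 < α) (hα1 : α ≤ 1) :
    |s ^ α - t ^ α| ≤ |s - t| ^ α := by
  wlog h : t ≤ s
  · rw [abs_sub_comm, abs_sub_comm s t]; exact this ht hs hα hα1 (le_of_not_ge h)
  have h1 : s ^ α ≤ t ^ α + (s - t) ^ α := by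
    have h2 := aux_add_rpow_le ht (sub_nonneg.mpr h) hα hα1
    have h3 : t + (s - t) = s := by ring
    rwa [h3] at h2
  have h2 : t ^ α ≤ s ^ α := Real.rpow_le_rpow ht h hα.le
  rw [abs_of_nonneg (sub_nonneg.mpr h2), abs_of_nonneg (sub_nonneg.mpr h)]
  linarith

lemma aux_rpow_exp_diff {t M l α β : ℝ} (ht : 0 ≤ t) (htM : t ≤ M) (hM : 1 ≤ M)
    (hl : 0 < l) (hlα : l ≤ α) (hαβ : α ≤ β) (hβ : β ≤ 1) :
    |t ^ α - t ^ β| ≤ (1 / (l * Real.exp 1) + M ^ 3) * (β - α) := by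
  have hα0 : 0 < α := lt_of_lt_of_le hl hlα
  have hβ0 : 0 < β := lt_of_lt_of_le hα0 hαβ
  have hK0 : 0 ≤ 1 / (l * Real.exp 1) + M ^ 3 := by positivity
  rcases eq_or_lt_of_le ht with h0 | htpos
  · rw [← h0, Real.zero_rpow hα0.ne', Real.zero_rpow hβ0.ne', sub_zero, abs_zero]
    exact mul_nonneg hK0 (by linarith)
  rcases le_or_gt t 1 with ht1 | ht1
  · -- 0 < t ≤ 1
    have hba : t ^ β ≤ t ^ α := Real.rpow_le_rpow_of_exponent_ge htpos ht1 hαβ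
    rw [abs_of_nonneg (sub_nonneg.mpr hba)]
    have hlog : Real.log t ≤ 0 := Real.log_nonpos ht ht1
    have hexp : t ^ (β - α) = Real.exp ((β - α) * Real.log t) := by
      rw [Real.rpow_def_of_pos htpos]; ring_nf
    have hsplit : t ^ β = t ^ α * t ^ (β - α) := by
      rw [← Real.rpow_add htpos]; ring_nf
    have h1 : 1 - Real.exp ((β - α) * Real.log t) ≤ (β - α) * (-Real.log t) := by
      have := Real.add_one_le_exp ((β - α) * Real.log t); linarith
    have htα : (0:ℝ) ≤ t ^ α := Real.rpow_nonneg ht _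
    have hkey : t ^ α * (-Real.log t) ≤ 1 / (l * Real.exp 1) := by
      have hx0 : 0 ≤ α * (-Real.log t) := mul_nonneg hα0.le (by linarith)
      have h2 := aux_xexp hx0
      have h3 : Real.exp (-(α * (-Real.log t))) = t ^ α := by
        rw [Real.rpow_def_of_pos htpos]; congr 1; ring
      have h4 : t ^ α * (-Real.log t) =
          (α * (-Real.log t)) * Real.exp (-(α * (-Real.log t))) / α := by
        rw [h3]; field_simp
      have h5 : (α * (-Real.log t)) * Real.exp (-(α * (-Real.log t))) / α ≤
          (Real.exp 1)⁻¹ / α := by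
        apply div_le_div_of_nonneg_right h2 hα0.le
      have h6 : (Real.exp 1)⁻¹ / α ≤ 1 / (l * Real.exp 1) := by
        rw [div_le_div_iff₀ hα0 (by positivity)]
        have he : (Real.exp 1)⁻¹ * (l * Real.exp 1) = l := by
          field_simp
        rw [he]; linarith
      linarith [h4 ▸ (h5.trans h6)]
    calc t ^ α - t ^ β = t ^ α * (1 - Real.exp ((β - α) * Real.log t)) := by
          rw [hsplit, hexp]; ring
      _ ≤ t ^ α * ((β - α) * (-Real.log t)) := mul_le_mul_of_nonneg_left h1 htα
      _ = (β - α) * (t ^ α * (-Real.log t)) := by ring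
      _ ≤ (β - α) * (1 / (l * Real.exp 1)) := mul_le_mul_of_nonneg_left hkey (by linarith)
      _ ≤ (1 / (l * Real.exp 1) + M ^ 3) * (β - α) := by nlinarith [pow_pos (lt_of_lt_of_le one_pos hM) 3]
  · -- 1 < t
    have hab : t ^ α ≤ t ^ β := Real.rpow_le_rpow_of_exponent_le ht1.le hαβ
    rw [abs_sub_comm, abs_of_nonneg (sub_nonneg.mpr hab)]
    have hM0 : (0:ℝ) < M := lt_of_lt_of_le one_pos hM
    have hlog0 : 0 ≤ Real.log t := Real.log_nonneg ht1.le
    have hu0 : 0 ≤ (β - α) * Real.log t := mul_nonneg (by linarith) hlog0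
    have hexp : t ^ (β - α) = Real.exp ((β - α) * Real.log t) := by
      rw [Real.rpow_def_of_pos htpos]; ring_nf
    have hsplit : t ^ β = t ^ α * t ^ (β - α) := by
      rw [← Real.rpow_add htpos]; ring_nf
    have htαM : t ^ α ≤ M := by
      calc t ^ α ≤ t ^ (1:ℝ) := Real.rpow_le_rpow_of_exponent_le ht1.le (hαβ.trans hβ)
        _ = t := Real.rpow_one t
        _ ≤ M := htM
    have hlogM : Real.log t ≤ M := (Real.log_le_sub_one_of_pos htpos).trans (by linarith)
    have heu : Real.exp ((β - α) * Real.log t) ≤ M := by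
      calc Real.exp ((β - α) * Real.log t) ≤ Real.exp (Real.log t) := by
            apply Real.exp_le_exp.mpr
            nlinarith
        _ = t := Real.exp_log htpos
        _ ≤ M := htM
    have h1 : Real.exp ((β - α) * Real.log t) - 1 ≤
        ((β - α) * Real.log t) * Real.exp ((β - α) * Real.log t) := by
      have h := Real.add_one_le_exp (-((β - α) * Real.log t))
      have hmul : Real.exp (-((β - α) * Real.log t)) * Real.exp ((β - α) * Real.log t) = 1 := by
        rw [← Real.exp_add]; simp
      nlinarith [Real.exp_pos ((β - α) * Real.log t)]
    have h2 : ((β - α) * Real.log t) * Real.exp ((β - α) * Real.log t) ≤ (β - α) * M * M := by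
      have ha : ((β - α) * Real.log t) * Real.exp ((β - α) * Real.log t) ≤
          ((β - α) * Real.log t) * M := mul_le_mul_of_nonneg_left heu hu0
      have hb : (β - α) * Real.log t ≤ (β - α) * M :=
        mul_le_mul_of_nonneg_left hlogM (by linarith)
      nlinarith
    have htα0 : (0:ℝ) ≤ t ^ α := Real.rpow_nonneg ht _
    have hone : (1:ℝ) ≤ Real.exp ((β - α) * Real.log t) := Real.one_le_exp hu0
    calc t ^ β - t ^ α = t ^ α * (Real.exp ((β - α) * Real.log t) - 1) := by
          rw [hsplit, hexp]; ring
      _ ≤ M * (Real.exp ((β - α) * Real.log t) - 1) := by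
          apply mul_le_mul_of_nonneg_right htαM (by linarith)
      _ ≤ M * ((β - α) * M * M) := by nlinarith
      _ ≤ (1 / (l * Real.exp 1) + M ^ 3) * (β - α) := by
          have hc : 0 ≤ 1 / (l * Real.exp 1) := by positivity
          nlinarith

/-- if `q : Ω → [1,∞)` is bounded and log-Hölder continuous and
`a ≥ 0` is bounded and `q⁺`-Hölder continuous, then there is `C > 0` with
`|a(x)^{1/q(x)} − a(y)^{1/q(y)}| ≤ C / log(e + 1/|x−y|)` whenever `0 < |x−y| ≤ 1`. -/
theorem stmt_8 {n : ℕ}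
    (Ω : Set (EuclideanSpace ℝ (Fin n)))
    (q a : EuclideanSpace ℝ (Fin n) → ℝ)
    (hq1 : ∀ x ∈ Ω, 1 ≤ q x) (hqB : BddAbove (q '' Ω))
    (Cq : ℝ) (hCq : 0 < Cq)
    (hqLH : ∀ x ∈ Ω, ∀ y ∈ Ω, x ≠ y →
      |q x - q y| ≤ Cq / Real.log (Real.exp 1 + 1 / dist x y))
    (ha0 : ∀ x ∈ Ω, 0 ≤ a x) (haB : BddAbove (a '' Ω))
    (ca : ℝ) (hca : 0 < ca)
    (haH : ∀ x ∈ Ω, ∀ y ∈ Ω, |a x - a y| ≤ ca * dist x y ^ sSup (q '' Ω)) :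
    ∃ C : ℝ, 0 < C ∧ ∀ x ∈ Ω, ∀ y ∈ Ω, 0 < dist x y → dist x y ≤ 1 →
      |a x ^ (1 / q x) - a y ^ (1 / q y)| ≤
        C / Real.log (Real.exp 1 + 1 / dist x y) := by
  rcases Ω.eq_empty_or_nonempty with hΩ | ⟨z, hz⟩
  · exact ⟨1, one_pos, by simp [hΩ]⟩
  set Q := sSup (q '' Ω) with hQdef
  have hQ1 : 1 ≤ Q := (hq1 z hz).trans (le_csSup hqB ⟨z, hz, rfl⟩)
  have hQ0 : (0:ℝ) < Q := lt_of_lt_of_le one_pos hQ1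
  have hqQ : ∀ x ∈ Ω, q x ≤ Q := fun x hx => le_csSup hqB ⟨x, hx, rfl⟩
  set M := max (sSup (a '' Ω)) 1 with hMdef
  have hM1 : (1:ℝ) ≤ M := le_max_right _ _
  have haM : ∀ x ∈ Ω, a x ≤ M := fun x hx =>
    (le_csSup haB ⟨x, hx, rfl⟩).trans (le_max_left _ _)
  set K := 1 / (1 / Q * Real.exp 1) + M ^ 3 with hKdef
  have hK0 : 0 < K := by positivity
  refine ⟨max ca 1 * (Real.exp 1 + 1) + K * Cq, by positivity, ?_⟩
  intro x hx y hy hd hd1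
  set d := dist x y with hddef
  set L := Real.log (Real.exp 1 + 1 / d) with hLdef
  have hL1 : 1 ≤ L := by
    have hstep : Real.exp 1 ≤ Real.exp 1 + 1 / d := by
      have : 0 < 1 / d := by positivity
      linarith
    have h := Real.log_le_log (Real.exp_pos 1) hstep
    rwa [Real.log_exp] at h
  have hL0 : (0:ℝ) < L := lt_of_lt_of_le one_pos hL1
  have hdL : d ≤ (Real.exp 1 + 1) / L := by
    rw [le_div_iff₀ hL0]
    have h1 : L ≤ (Real.exp 1 + 1 / d) - 1 :=
      Real.log_le_sub_one_of_pos (by positivity)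
    have h2 : d * L ≤ d * ((Real.exp 1 + 1 / d) - 1) :=
      mul_le_mul_of_nonneg_left h1 hd.le
    have h3 : d * ((Real.exp 1 + 1 / d) - 1) = d * Real.exp 1 + 1 - d := by
      field_simp
    nlinarith [Real.exp_pos 1]
  have hqx1 := hq1 x hx
  have hqy1 := hq1 y hy
  have hqx0 : (0:ℝ) < q x := lt_of_lt_of_le one_pos hqx1
  have hqy0 : (0:ℝ) < q y := lt_of_lt_of_le one_pos hqy1
  have hαx0 : (0:ℝ) < 1 / q x := by positivity
  have hαy0 : (0:ℝ) < 1 / q y := by positivity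
  have hαx1 : 1 / q x ≤ 1 := by rw [div_le_one hqx0]; exact hqx1
  have hαy1 : 1 / q y ≤ 1 := by rw [div_le_one hqy0]; exact hqy1
  have hlx : 1 / Q ≤ 1 / q x := one_div_le_one_div_of_le hqx0 (hqQ x hx)
  have hly : 1 / Q ≤ 1 / q y := one_div_le_one_div_of_le hqy0 (hqQ y hy)
  have hlQ : (0:ℝ) < 1 / Q := by positivity
  -- Term 1
  have T1 : |a x ^ (1 / q x) - a y ^ (1 / q x)| ≤ max ca 1 * d := by
    have h1 : |a x ^ (1 / q x) - a y ^ (1 / q x)| ≤ |a x - a y| ^ (1 / q x) :=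
      aux_abs_rpow_sub (ha0 x hx) (ha0 y hy) hαx0 hαx1
    have h2 : |a x - a y| ^ (1 / q x) ≤ (ca * d ^ Q) ^ (1 / q x) :=
      Real.rpow_le_rpow (abs_nonneg _) (haH x hx y hy) hαx0.le
    have h3 : (ca * d ^ Q) ^ (1 / q x) = ca ^ (1 / q x) * (d ^ Q) ^ (1 / q x) :=
      Real.mul_rpow hca.le (Real.rpow_nonneg hd.le _)
    have h4 : ca ^ (1 / q x) ≤ max ca 1 := by
      rcases le_total ca 1 with h | h
      · exact (Real.rpow_le_one hca.le h hαx0.le).trans (le_max_right _ _)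
      · exact le_trans (by
          calc ca ^ (1 / q x) ≤ ca ^ (1:ℝ) := Real.rpow_le_rpow_of_exponent_le h hαx1
            _ = ca := Real.rpow_one ca) (le_max_left _ _)
    have h5 : (d ^ Q) ^ (1 / q x) ≤ d := by
      rw [← Real.rpow_mul hd.le]
      have hexp1 : (1:ℝ) ≤ Q * (1 / q x) := by
        rw [mul_one_div, le_div_iff₀ hqx0, one_mul]; exact hqQ x hx
      calc d ^ (Q * (1 / q x)) ≤ d ^ (1:ℝ) :=
            Real.rpow_le_rpow_of_exponent_ge hd hd1 hexp1
        _ = d := Real.rpow_one d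
    calc |a x ^ (1 / q x) - a y ^ (1 / q x)| ≤ ca ^ (1 / q x) * (d ^ Q) ^ (1 / q x) := by
          rw [← h3]; exact h1.trans h2
      _ ≤ max ca 1 * d := by
          apply mul_le_mul h4 h5 (Real.rpow_nonneg (Real.rpow_nonneg hd.le _) _)
            (le_trans hca.le (le_max_left _ _))
  -- Term 2
  have hqdiff : |1 / q x - 1 / q y| ≤ |q x - q y| := by
    rw [div_sub_div _ _ hqx0.ne' hqy0.ne', abs_div, one_mul, mul_one]
    have hden : (1:ℝ) ≤ |q x * q y| := by
      rw [abs_of_pos (mul_pos hqx0 hqy0)]; nlinarith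
    calc |q y - q x| / |q x * q y| ≤ |q y - q x| / 1 :=
          div_le_div_of_nonneg_left (abs_nonneg _) one_pos hden
      _ = |q x - q y| := by rw [div_one, abs_sub_comm]
  have hxny : x ≠ y := dist_pos.mp hd
  have hqLHxy := hqLH x hx y hy hxny
  have T2 : |a y ^ (1 / q x) - a y ^ (1 / q y)| ≤ K * (Cq / L) := by
    have habs : |a y ^ (1 / q x) - a y ^ (1 / q y)| ≤ K * |1 / q x - 1 / q y| := by
      rcases le_total (1 / q x) (1 / q y) with h | h
      · have := aux_rpow_exp_diff (ha0 y hy) (haM y hy) hM1 hlQ hlx h hαy1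
        rwa [abs_of_nonpos (by linarith : 1 / q x - 1 / q y ≤ 0), neg_sub]
      · have := aux_rpow_exp_diff (ha0 y hy) (haM y hy) hM1 hlQ hly h hαx1
        rw [abs_sub_comm] at this
        rwa [abs_of_nonneg (by linarith : 0 ≤ 1 / q x - 1 / q y)]
    calc |a y ^ (1 / q x) - a y ^ (1 / q y)| ≤ K * |1 / q x - 1 / q y| := habs
      _ ≤ K * |q x - q y| := mul_le_mul_of_nonneg_left hqdiff hK0.le
      _ ≤ K * (Cq / L) := mul_le_mul_of_nonneg_left hqLHxy hK0.le
  -- combine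
  have hsplitabs : |a x ^ (1 / q x) - a y ^ (1 / q y)| ≤
      |a x ^ (1 / q x) - a y ^ (1 / q x)| + |a y ^ (1 / q x) - a y ^ (1 / q y)| :=
    abs_sub_le _ _ _
  have hfin : max ca 1 * d + K * (Cq / L) ≤
      (max ca 1 * (Real.exp 1 + 1) + K * Cq) / L := by
    have h1 : max ca 1 * d ≤ max ca 1 * ((Real.exp 1 + 1) / L) :=
      mul_le_mul_of_nonneg_left hdL (le_trans hca.le (le_max_left _ _))
    have h2 : (max ca 1 * (Real.exp 1 + 1) + K * Cq) / L =
        max ca 1 * ((Real.exp 1 + 1) / L) + K * (Cq / L) := by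
      field_simp
    rw [h2]; linarith
  linarith
end

section
/- Let Ω ⊆ ℝⁿ (n ≥ 2) be a bounded domain, let p, q : Ω → [1,∞) be bounded with p(x) ≤ q(x) for all x ∈ Ω, let r be bounded with r⁺ ≥ 0, and let a ∈ L^∞(Ω) with a ≥ 0. Set h := [1 + ‖a‖_∞ (log(e+1))^{r⁺}]^{p⁺+1}. Then for a.e. x ∈ Ω: Φ(x,t) ≤ t^{p⁺+1} + h for all t ∈ [0,1], and t^{p⁺+1} ≤ Φ(x,t) + h for all t ≥ 0 with Φ(x,t) ≤ 1. In particular Φ satisfies condition (A2)' with s = 1, φ_∞(t) = t^{p⁺+1}, β = 1 and constant function h. -/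
open MeasureTheory Set
open scoped ENNReal

/-- on a bounded domain, with
`h = [1 + ‖a‖_∞ (log(e+1))^{r⁺}]^{p⁺+1}`, for a.e. `x ∈ Ω` one has
`Φ(x,t) ≤ t^{p⁺+1} + h` for all `t ∈ [0,1]`, and `t^{p⁺+1} ≤ Φ(x,t) + h` for all
`t ≥ 0` with `Φ(x,t) ≤ 1`; i.e. `Φ` satisfies (A2)' with `s = 1`,
`φ_∞(t) = t^{p⁺+1}`, `β = 1` and constant `h`. -/
theorem stmt_10 {n : ℕ} (hn : 2 ≤ n)
    (Ω : Set (EuclideanSpace ℝ (Fin n))) (hΩo : IsOpen Ω) (hΩc : IsConnected Ω)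
    (hΩb : Bornology.IsBounded Ω)
    (p q r a : EuclideanSpace ℝ (Fin n) → ℝ)
    (hp1 : ∀ x ∈ Ω, 1 ≤ p x) (hq1 : ∀ x ∈ Ω, 1 ≤ q x)
    (hpB : BddAbove (p '' Ω)) (hqB : BddAbove (q '' Ω))
    (hpq : ∀ x ∈ Ω, p x ≤ q x)
    (hrB : BddAbove (r '' Ω)) (hrb : BddBelow (r '' Ω)) (hrplus : 0 ≤ sSup (r '' Ω))
    (ha0 : ∀ x ∈ Ω, 0 ≤ a x) (haB : BddAbove (a '' Ω)) :
    ∀ᵐ x ∂(volume.restrict Ω),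
      (∀ t ∈ Set.Icc (0:ℝ) 1,
        Phi p q r a x t ≤ t ^ (sSup (p '' Ω) + 1) +
          (1 + sSup (a '' Ω) * (Real.log (Real.exp 1 + 1)) ^ sSup (r '' Ω)) ^
            (sSup (p '' Ω) + 1)) ∧
      (∀ t : ℝ, 0 ≤ t → Phi p q r a x t ≤ 1 →
        t ^ (sSup (p '' Ω) + 1) ≤ Phi p q r a x t +
          (1 + sSup (a '' Ω) * (Real.log (Real.exp 1 + 1)) ^ sSup (r '' Ω)) ^
            (sSup (p '' Ω) + 1)) := by
  obtain ⟨x₀, hx₀⟩ := hΩc.nonempty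
  set P := sSup (p '' Ω) with hPdef
  set A := sSup (a '' Ω) with hAdef
  set R := sSup (r '' Ω) with hRdef
  have hP1 : 1 ≤ P := le_trans (hp1 x₀ hx₀) (le_csSup hpB ⟨x₀, hx₀, rfl⟩)
  have hA0 : 0 ≤ A := (ha0 x₀ hx₀).trans (le_csSup haB ⟨x₀, hx₀, rfl⟩)
  have hlog1 : (1:ℝ) ≤ Real.log (Real.exp 1 + 1) := by
    calc (1:ℝ) = Real.log (Real.exp 1) := (Real.log_exp 1).symm
      _ ≤ Real.log (Real.exp 1 + 1) := Real.log_le_log (Real.exp_pos 1) (by linarith)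
  have hbase : (1:ℝ) ≤ 1 + A * Real.log (Real.exp 1 + 1) ^ R := by
    have : 0 ≤ A * Real.log (Real.exp 1 + 1) ^ R :=
      mul_nonneg hA0 (Real.rpow_nonneg (by linarith) _)
    linarith
  have hh1 : 1 + A * Real.log (Real.exp 1 + 1) ^ R ≤
      (1 + A * Real.log (Real.exp 1 + 1) ^ R) ^ (P + 1) := by
    calc 1 + A * Real.log (Real.exp 1 + 1) ^ R
        = (1 + A * Real.log (Real.exp 1 + 1) ^ R) ^ (1:ℝ) := (Real.rpow_one _).symm
      _ ≤ (1 + A * Real.log (Real.exp 1 + 1) ^ R) ^ (P + 1) :=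
        Real.rpow_le_rpow_of_exponent_le hbase (by linarith)
  have hh1' : (1:ℝ) ≤ (1 + A * Real.log (Real.exp 1 + 1) ^ R) ^ (P + 1) :=
    le_trans hbase hh1
  refine ae_restrict_of_forall_mem hΩo.measurableSet ?_
  intro x hx
  have hpx := hp1 x hx
  have hqx := hq1 x hx
  have hax := ha0 x hx
  have hpxP : p x ≤ P := le_csSup hpB ⟨x, hx, rfl⟩
  have haxA : a x ≤ A := le_csSup haB ⟨x, hx, rfl⟩
  have hrxR : r x ≤ R := le_csSup hrB ⟨x, hx, rfl⟩
  constructor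
  · rintro t ⟨ht0, ht1⟩
    have hL1 : (1:ℝ) ≤ Real.log (Real.exp 1 + t) := by
      calc (1:ℝ) = Real.log (Real.exp 1) := (Real.log_exp 1).symm
        _ ≤ Real.log (Real.exp 1 + t) := Real.log_le_log (Real.exp_pos 1) (by linarith)
    have hle : Real.log (Real.exp 1 + t) ^ r x ≤ Real.log (Real.exp 1 + 1) ^ R :=
      calc Real.log (Real.exp 1 + t) ^ r x
          ≤ Real.log (Real.exp 1 + t) ^ R :=
            Real.rpow_le_rpow_of_exponent_le hL1 hrxR
        _ ≤ Real.log (Real.exp 1 + 1) ^ R :=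
            Real.rpow_le_rpow (by linarith)
              (Real.log_le_log (by positivity) (by linarith)) hrplus
    have htp : t ^ p x ≤ 1 := Real.rpow_le_one ht0 ht1 (by linarith)
    have htq : t ^ q x ≤ 1 := Real.rpow_le_one ht0 ht1 (by linarith [hpq x hx])
    have h2 : a x * t ^ q x * Real.log (Real.exp 1 + t) ^ r x ≤
        A * Real.log (Real.exp 1 + 1) ^ R := by
      calc a x * t ^ q x * Real.log (Real.exp 1 + t) ^ r x
          ≤ A * 1 * (Real.log (Real.exp 1 + 1) ^ R) := by
            apply mul_le_mul
            · exact mul_le_mul haxA htq (Real.rpow_nonneg ht0 _) hA0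
            · exact hle
            · exact Real.rpow_nonneg (by linarith) _
            · have : 0 ≤ A * 1 := by linarith
              linarith
        _ = A * Real.log (Real.exp 1 + 1) ^ R := by ring
    have hT : 0 ≤ t ^ (P + 1) := Real.rpow_nonneg ht0 _
    have : Phi p q r a x t ≤ 1 + A * Real.log (Real.exp 1 + 1) ^ R := by
      unfold Phi; linarith
    linarith
  · intro t ht0 hΦ
    have hL1 : (1:ℝ) ≤ Real.log (Real.exp 1 + t) := by
      calc (1:ℝ) = Real.log (Real.exp 1) := (Real.log_exp 1).symm
        _ ≤ Real.log (Real.exp 1 + t) := Real.log_le_log (Real.exp_pos 1) (by linarith)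
    have hΦ0 : 0 ≤ Phi p q r a x t := by
      unfold Phi
      have := mul_nonneg (mul_nonneg hax (Real.rpow_nonneg ht0 (q x)))
        (Real.rpow_nonneg (by linarith : (0:ℝ) ≤ Real.log (Real.exp 1 + t)) (r x))
      have := Real.rpow_nonneg ht0 (p x)
      linarith
    have ht1 : t ≤ 1 := by
      by_contra hgt
      push_neg at hgt
      have h1 : 1 < t ^ p x := by
        rw [Real.one_lt_rpow_iff_of_pos (by linarith)]
        exact Or.inl ⟨hgt, by linarith⟩
      have h2 : t ^ p x ≤ Phi p q r a x t := by
        unfold Phi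
        have := mul_nonneg (mul_nonneg hax (Real.rpow_nonneg ht0 (q x)))
          (Real.rpow_nonneg (by linarith : (0:ℝ) ≤ Real.log (Real.exp 1 + t)) (r x))
        linarith
      linarith
    have hT1 : t ^ (P + 1) ≤ 1 := Real.rpow_le_one ht0 ht1 (by linarith)
    linarith
end

section
/- Let Ω ⊆ ℝⁿ (n ≥ 2) be a domain, let p, q : Ω → [1,∞) be bounded measurable with p(x) ≤ q(x) for all x ∈ Ω, let r be bounded with r⁺ ≥ 0, let a ∈ L^∞(Ω) with a ≥ 0, and suppose p satisfies Nekvinda's decay condition with constants c ∈ (0,1) and p_∞ ∈ [1,∞). Then there exist β ∈ (0,1] and a nonnegative function h ∈ L¹(Ω) ∩ L^∞(Ω) such that for a.e. x ∈ Ω: Φ(x, β t) ≤ t^{p_∞} + h(x) for all t ∈ [0,1], and (β t)^{p_∞} ≤ Φ(x,t) + h(x) for all t ≥ 0 with Φ(x,t) ≤ 1; that is, Φ satisfies condition (A2)'. -/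
open MeasureTheory Set
open scoped ENNReal

lemma young_aux {B t P Q : ℝ} (hB : 0 ≤ B) (ht : 0 ≤ t) (hP : 0 < P)
    (hPQ : P < Q) : (B * t) ^ P ≤ t ^ Q + B ^ (P * Q / (Q - P)) := by
  have hQP : (0:ℝ) < Q - P := sub_pos.2 hPQ
  rcases eq_or_lt_of_le ht with rfl | ht0
  · rw [mul_zero, Real.zero_rpow hP.ne']
    exact add_nonneg (Real.rpow_nonneg le_rfl _) (Real.rpow_nonneg hB _)
  rcases le_or_gt B (t ^ ((Q - P) / P)) with hcs | hcs
  · have h1 : (B * t) ^ P = B ^ P * t ^ P := Real.mul_rpow hB ht0.le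
    have h2 : B ^ P ≤ (t ^ ((Q - P) / P)) ^ P := Real.rpow_le_rpow hB hcs hP.le
    have h3 : (t ^ ((Q - P) / P)) ^ P = t ^ (Q - P) := by
      rw [← Real.rpow_mul ht0.le]
      congr 1
      field_simp
    have h4 : t ^ (Q - P) * t ^ P = t ^ Q := by
      rw [← Real.rpow_add ht0]; ring_nf
    have h5 : (B * t) ^ P ≤ t ^ Q := by
      rw [h1, ← h4]
      exact mul_le_mul_of_nonneg_right (h3 ▸ h2) (Real.rpow_nonneg ht0.le P)
    exact h5.trans (le_add_of_nonneg_right (Real.rpow_nonneg hB _))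
  · have hB0 : 0 < B := lt_of_le_of_lt (Real.rpow_nonneg ht0.le _) hcs
    have ht' : t < B ^ (P / (Q - P)) := by
      have h5 := Real.rpow_lt_rpow (Real.rpow_nonneg ht0.le _) hcs (div_pos hP hQP)
      rwa [← Real.rpow_mul ht0.le, show (Q - P) / P * (P / (Q - P)) = 1 by
        field_simp, Real.rpow_one] at h5
    have h6 : t ^ P < (B ^ (P / (Q - P))) ^ P := Real.rpow_lt_rpow ht0.le ht' hP
    have h8 : (B * t) ^ P = B ^ P * t ^ P := Real.mul_rpow hB ht0.le
    have h9 : B ^ P * t ^ P ≤ B ^ P * (B ^ (P / (Q - P))) ^ P :=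
      mul_le_mul_of_nonneg_left h6.le (Real.rpow_nonneg hB P)
    have h10 : B ^ P * (B ^ (P / (Q - P))) ^ P = B ^ (P * Q / (Q - P)) := by
      rw [← Real.rpow_mul hB, ← Real.rpow_add hB0]
      congr 1
      field_simp
      ring
    calc (B * t) ^ P = B ^ P * t ^ P := h8
      _ ≤ B ^ (P * Q / (Q - P)) := by rw [← h10]; exact h9
      _ ≤ t ^ Q + B ^ (P * Q / (Q - P)) :=
          le_add_of_nonneg_left (Real.rpow_nonneg ht0.le _)

lemma exp_eq_aux {P Q : ℝ} (hP : 0 < P) (hQ : 0 < Q) (hPQ : P < Q) :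
    P * Q / (Q - P) = 1 / |1 / Q - 1 / P| := by
  have h1 : 1 / Q - 1 / P < 0 := by
    rw [sub_neg]
    exact one_div_lt_one_div_of_lt hP hPQ
  rw [abs_of_neg h1, neg_sub]
  rw [show 1 / P - 1 / Q = (Q - P) / (P * Q) by field_simp, one_div_div]

/-- if `p` satisfies Nekvinda's decay condition with constants
`c ∈ (0,1)` and `p_∞ ∈ [1,∞)`, then `Φ` satisfies (A2)': there are `β ∈ (0,1]` and a
nonnegative `h ∈ L¹(Ω) ∩ L^∞(Ω)` such that for a.e. `x ∈ Ω`,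
`Φ(x,βt) ≤ t^{p_∞} + h(x)` for all `t ∈ [0,1]`, and `(βt)^{p_∞} ≤ Φ(x,t) + h(x)`
for all `t ≥ 0` with `Φ(x,t) ≤ 1`. -/
theorem stmt_11 {n : ℕ} (hn : 2 ≤ n)
    (Ω : Set (EuclideanSpace ℝ (Fin n))) (hΩo : IsOpen Ω) (hΩc : IsConnected Ω)
    (p q r a : EuclideanSpace ℝ (Fin n) → ℝ)
    (hpm : Measurable p) (hqm : Measurable q)
    (hp1 : ∀ x ∈ Ω, 1 ≤ p x) (hq1 : ∀ x ∈ Ω, 1 ≤ q x)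
    (hpB : BddAbove (p '' Ω)) (hqB : BddAbove (q '' Ω))
    (hpq : ∀ x ∈ Ω, p x ≤ q x)
    (hrB : BddAbove (r '' Ω)) (hrb : BddBelow (r '' Ω)) (hrplus : 0 ≤ sSup (r '' Ω))
    (ha0 : ∀ x ∈ Ω, 0 ≤ a x) (haB : BddAbove (a '' Ω))
    (c pinf : ℝ) (hc : c ∈ Set.Ioo (0:ℝ) 1) (hpinf : 1 ≤ pinf)
    (hNek : (∫⁻ x in {x | x ∈ Ω ∧ p x ≠ pinf},
        ENNReal.ofReal (c ^ (1 / |1 / pinf - 1 / p x|))) < ⊤) :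
    ∃ β : ℝ, 0 < β ∧ β ≤ 1 ∧
      ∃ h : EuclideanSpace ℝ (Fin n) → ℝ,
        (∀ x, 0 ≤ h x) ∧ IntegrableOn h Ω ∧ BddAbove (h '' Ω) ∧
        ∀ᵐ x ∂(volume.restrict Ω),
          (∀ t ∈ Set.Icc (0:ℝ) 1, Phi p q r a x (β * t) ≤ t ^ pinf + h x) ∧
          (∀ t : ℝ, 0 ≤ t → Phi p q r a x t ≤ 1 →
            (β * t) ^ pinf ≤ Phi p q r a x t + h x) := by
  obtain ⟨hc0, hc1⟩ := hc
  have he2 : (2:ℝ) ≤ Real.exp 1 := by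
    have := Real.add_one_le_exp (1:ℝ); linarith
  set L : ℝ := Real.log (Real.exp 1 + 1) with hLdef
  set R : ℝ := sSup (r '' Ω) with hRdef
  set A : ℝ := max (sSup (a '' Ω)) 0 with hAdef
  have hL1 : 1 ≤ L := by
    rw [hLdef, Real.le_log_iff_exp_le (by positivity)]
    linarith
  have hA0 : 0 ≤ A := le_max_right _ _
  have hR0 : 0 ≤ R := hrplus
  set M : ℝ := 1 + A * L ^ R with hMdef
  have hM1 : 1 ≤ M := by
    have : 0 ≤ A * L ^ R := mul_nonneg hA0 (Real.rpow_nonneg (by linarith) R)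
    rw [hMdef]; linarith
  have hM0 : 0 < M := lt_of_lt_of_le one_pos hM1
  have hpinf0 : 0 < pinf := lt_of_lt_of_le one_pos hpinf
  have hβ0 : 0 < c / M := div_pos hc0 hM0
  have hβc : c / M ≤ c := div_le_self hc0.le hM1
  have hβ1 : c / M ≤ 1 := hβc.trans hc1.le
  have haA : ∀ x ∈ Ω, a x ≤ A := fun x hx =>
    le_trans (le_csSup haB ⟨x, hx, rfl⟩) (le_max_left _ _)
  have hrR : ∀ x ∈ Ω, r x ≤ R := fun x hx => le_csSup hrB ⟨x, hx, rfl⟩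
  -- upper bound for Phi on [0,1]
  have hPhi_le : ∀ x ∈ Ω, ∀ s : ℝ, 0 ≤ s → s ≤ 1 →
      Phi p q r a x s ≤ M * s ^ p x := by
    intro x hx s hs0 hs1
    have hpx0 : 0 < p x := lt_of_lt_of_le one_pos (hp1 x hx)
    have hqx0 : 0 < q x := lt_of_lt_of_le one_pos (hq1 x hx)
    rcases eq_or_lt_of_le hs0 with rfl | hs0'
    · simp only [Phi, Real.zero_rpow hpx0.ne', Real.zero_rpow hqx0.ne']
      simp
    · have hlg1 : 1 ≤ Real.log (Real.exp 1 + s) := by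
        rw [Real.le_log_iff_exp_le (by linarith)]
        linarith
      have hlgL : Real.log (Real.exp 1 + s) ≤ L := by
        rw [hLdef]
        exact Real.log_le_log (by linarith) (by linarith)
      have hsq : s ^ q x ≤ s ^ p x :=
        Real.rpow_le_rpow_of_exponent_ge hs0' hs1 (hpq x hx)
      have hlog : Real.log (Real.exp 1 + s) ^ r x ≤ L ^ R := by
        calc Real.log (Real.exp 1 + s) ^ r x
            ≤ Real.log (Real.exp 1 + s) ^ R :=
              Real.rpow_le_rpow_of_exponent_le hlg1 (hrR x hx)
          _ ≤ L ^ R := Real.rpow_le_rpow (by linarith) hlgL hR0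
      have hterm : a x * s ^ q x * Real.log (Real.exp 1 + s) ^ r x
          ≤ A * s ^ p x * L ^ R := by
        apply mul_le_mul _ hlog (Real.rpow_nonneg (by linarith) _)
          (mul_nonneg hA0 (Real.rpow_nonneg hs0 _))
        exact mul_le_mul (haA x hx) hsq (Real.rpow_nonneg hs0 _) hA0
      have hle : Phi p q r a x s ≤ s ^ p x + A * s ^ p x * L ^ R := by
        simp only [Phi]; linarith
      calc Phi p q r a x s ≤ s ^ p x + A * s ^ p x * L ^ R := hle
        _ = M * s ^ p x := by rw [hMdef]; ring
  -- lower bound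
  have hPhi_ge : ∀ x ∈ Ω, ∀ s : ℝ, 0 ≤ s → s ^ p x ≤ Phi p q r a x s := by
    intro x hx s hs0
    have hlg0 : 0 ≤ Real.log (Real.exp 1 + s) := Real.log_nonneg (by linarith)
    have : 0 ≤ a x * s ^ q x * Real.log (Real.exp 1 + s) ^ r x :=
      mul_nonneg (mul_nonneg (ha0 x hx) (Real.rpow_nonneg hs0 _))
        (Real.rpow_nonneg hlg0 _)
    simp only [Phi]; linarith
  -- the function h
  set S : Set (EuclideanSpace ℝ (Fin n)) := {x | x ∈ Ω ∧ p x ≠ pinf} with hSdef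
  set h : EuclideanSpace ℝ (Fin n) → ℝ :=
    S.indicator (fun x => M * c ^ (1 / |1 / pinf - 1 / p x|)) with hhdef
  have hh0 : ∀ x, 0 ≤ h x := fun x =>
    Set.indicator_nonneg (fun y _ => mul_nonneg hM0.le (Real.rpow_nonneg hc0.le _)) x
  have hSmeas : MeasurableSet S := by
    have hSeq : S = Ω ∩ {x | p x ≠ pinf} := rfl
    rw [hSeq]
    exact hΩo.measurableSet.inter (hpm (measurableSet_singleton pinf)).compl
  have hgmeas : Measurable fun x : EuclideanSpace ℝ (Fin n) =>
      1 / |1 / pinf - 1 / p x| := by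
    have h1 : Measurable fun x : EuclideanSpace ℝ (Fin n) => 1 / pinf - 1 / p x :=
      measurable_const.sub ((measurable_const : Measurable fun _ => (1:ℝ)).div hpm)
    exact (measurable_const : Measurable fun _ => (1:ℝ)).div h1.abs
  have hhmeas : Measurable h :=
    Measurable.indicator (measurable_const.mul (measurable_const.pow hgmeas)) hSmeas
  -- h is bounded by M
  have hhM : ∀ x, h x ≤ M := by
    intro x
    rw [hhdef]
    by_cases hxS : x ∈ S
    · rw [Set.indicator_of_mem hxS]
      have hle1 : c ^ (1 / |1 / pinf - 1 / p x|) ≤ 1 :=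
        Real.rpow_le_one hc0.le hc1.le (by positivity)
      exact mul_le_of_le_one_right hM0.le hle1
    · rw [Set.indicator_of_notMem hxS]; linarith
  -- h in the case x ∈ S
  have hhS : ∀ x ∈ S, h x = M * c ^ (1 / |1 / pinf - 1 / p x|) := fun x hx =>
    Set.indicator_of_mem hx _
  refine ⟨c / M, hβ0, hβ1, h, hh0, ?_, ?_, ?_⟩
  · -- IntegrableOn
    refine ⟨hhmeas.aestronglyMeasurable, ?_⟩
    rw [hasFiniteIntegral_iff_ofReal (Filter.Eventually.of_forall hh0)]
    have hind : ∀ x, ENNReal.ofReal (h x) =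
        S.indicator (fun x => ENNReal.ofReal (M * c ^ (1 / |1 / pinf - 1 / p x|))) x := by
      intro x
      rw [hhdef]
      by_cases hxS : x ∈ S
      · rw [Set.indicator_of_mem hxS, Set.indicator_of_mem hxS]
      · rw [Set.indicator_of_notMem hxS, Set.indicator_of_notMem hxS,
          ENNReal.ofReal_zero]
    calc ∫⁻ x in Ω, ENNReal.ofReal (h x)
        ≤ ∫⁻ x, ENNReal.ofReal (h x) := setLIntegral_le_lintegral _ _
      _ = ∫⁻ x in S, ENNReal.ofReal (M * c ^ (1 / |1 / pinf - 1 / p x|)) := by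
          rw [lintegral_congr hind, lintegral_indicator hSmeas]
      _ = ∫⁻ x in S, ENNReal.ofReal M *
            ENNReal.ofReal (c ^ (1 / |1 / pinf - 1 / p x|)) := by
          apply lintegral_congr
          intro x
          rw [ENNReal.ofReal_mul hM0.le]
      _ = ENNReal.ofReal M *
            ∫⁻ x in S, ENNReal.ofReal (c ^ (1 / |1 / pinf - 1 / p x|)) :=
          lintegral_const_mul' _ _ ENNReal.ofReal_ne_top
      _ < ⊤ := ENNReal.mul_lt_top ENNReal.ofReal_lt_top hNek
  · -- BddAbove
    refine ⟨M, ?_⟩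
    rintro y ⟨x, _, rfl⟩
    exact hhM x
  · -- a.e. statement
    filter_upwards [ae_restrict_mem hΩo.measurableSet] with x hx
    have hpx1 : 1 ≤ p x := hp1 x hx
    have hpx0 : 0 < p x := lt_of_lt_of_le one_pos hpx1
    constructor
    · -- first condition
      intro t ht
      obtain ⟨ht0, ht1⟩ := ht
      have hβt0 : 0 ≤ c / M * t := mul_nonneg hβ0.le ht0
      have hβt1 : c / M * t ≤ 1 := (mul_le_of_le_one_left ht0 hβ1).trans ht1
      have hΦle : Phi p q r a x (c / M * t) ≤ M * (c / M * t) ^ p x :=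
        hPhi_le x hx _ hβt0 hβt1
      -- rewrite M * (βt)^{px} as (Bt)^{px} with B = M^{1/px} * (c/M)
      have hMp : (M ^ (1 / p x)) ^ p x = M := by
        rw [← Real.rpow_mul hM0.le, one_div_mul_cancel hpx0.ne', Real.rpow_one]
      have hBnn : 0 ≤ M ^ (1 / p x) * (c / M) :=
        mul_nonneg (Real.rpow_nonneg hM0.le _) hβ0.le
      have hkey : (M ^ (1 / p x) * (c / M) * t) ^ p x = M * (c / M * t) ^ p x := by
        rw [mul_assoc, Real.mul_rpow (Real.rpow_nonneg hM0.le _)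
          (mul_nonneg hβ0.le ht0), hMp]
      have hBc : M ^ (1 / p x) * (c / M) ≤ c := by
        have h1 : M ^ (1 / p x) ≤ M := by
          calc M ^ (1 / p x) ≤ M ^ (1:ℝ) :=
              Real.rpow_le_rpow_of_exponent_le hM1
                (by rw [div_le_one hpx0]; exact hpx1)
            _ = M := Real.rpow_one M
        calc M ^ (1 / p x) * (c / M) ≤ M * (c / M) :=
            mul_le_mul_of_nonneg_right h1 hβ0.le
          _ = c := by field_simp
      set B : ℝ := M ^ (1 / p x) * (c / M) with hBdef
      rcases le_or_gt pinf (p x) with hcase | hcase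
      · -- pinf ≤ p x : no h needed
        have hBt_le_t : B * t ≤ t := by
          calc B * t ≤ 1 * t :=
              mul_le_mul_of_nonneg_right (hBc.trans hc1.le) ht0
            _ = t := one_mul t
        have hBt0 : 0 ≤ B * t := mul_nonneg hBnn ht0
        have hfinal : (B * t) ^ p x ≤ t ^ pinf := by
          rcases eq_or_lt_of_le hBt0 with heq | hBt0'
          · rw [← heq, Real.zero_rpow hpx0.ne']
            exact Real.rpow_nonneg ht0 _
          · calc (B * t) ^ p x ≤ (B * t) ^ pinf :=
                Real.rpow_le_rpow_of_exponent_ge hBt0' (hBt_le_t.trans ht1) hcase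
              _ ≤ t ^ pinf := Real.rpow_le_rpow hBt0 hBt_le_t hpinf0.le
        calc Phi p q r a x (c / M * t) ≤ M * (c / M * t) ^ p x := hΦle
          _ = (B * t) ^ p x := hkey.symm
          _ ≤ t ^ pinf := hfinal
          _ ≤ t ^ pinf + h x := le_add_of_nonneg_right (hh0 x)
      · -- p x < pinf : use Young
        have hy := young_aux hBnn ht0 hpx0 hcase
        have he0 : 0 ≤ p x * pinf / (pinf - p x) :=
          div_nonneg (mul_nonneg hpx0.le hpinf0.le) (by linarith)
        have hBe : B ^ (p x * pinf / (pinf - p x)) ≤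
            c ^ (p x * pinf / (pinf - p x)) :=
          Real.rpow_le_rpow hBnn hBc he0
        have hee : p x * pinf / (pinf - p x) = 1 / |1 / pinf - 1 / p x| :=
          exp_eq_aux hpx0 hpinf0 hcase
        have hxS : x ∈ S := ⟨hx, hcase.ne⟩
        have hhx : h x = M * c ^ (1 / |1 / pinf - 1 / p x|) := hhS x hxS
        have hch : c ^ (1 / |1 / pinf - 1 / p x|) ≤ h x := by
          rw [hhx]
          exact le_mul_of_one_le_left
            (Real.rpow_nonneg hc0.le (1 / |1 / pinf - 1 / p x|)) hM1
        calc Phi p q r a x (c / M * t) ≤ M * (c / M * t) ^ p x := hΦle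
          _ = (B * t) ^ p x := hkey.symm
          _ ≤ t ^ pinf + B ^ (p x * pinf / (pinf - p x)) := hy
          _ ≤ t ^ pinf + c ^ (1 / |1 / pinf - 1 / p x|) := by
              rw [← hee]; linarith
          _ ≤ t ^ pinf + h x := by linarith
    · -- second condition
      intro t ht0 hΦ1
      have hge : t ^ p x ≤ Phi p q r a x t := hPhi_ge x hx t ht0
      have ht1 : t ≤ 1 := by
        by_contra hgt
        push_neg at hgt
        have : 1 < t ^ p x :=
          (Real.one_lt_rpow_iff_of_pos (by linarith)).2 (Or.inl ⟨hgt, hpx0⟩)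
        linarith
      rcases le_or_gt (p x) pinf with hcase | hcase
      · -- p x ≤ pinf
        have hβt0 : 0 ≤ c / M * t := mul_nonneg hβ0.le ht0
        have hβt_le_t : c / M * t ≤ t := mul_le_of_le_one_left ht0 hβ1
        have hfinal : (c / M * t) ^ pinf ≤ t ^ p x := by
          rcases eq_or_lt_of_le hβt0 with heq | hβt0'
          · rw [← heq, Real.zero_rpow hpinf0.ne']
            exact Real.rpow_nonneg ht0 _
          · calc (c / M * t) ^ pinf ≤ (c / M * t) ^ p x :=
                Real.rpow_le_rpow_of_exponent_ge hβt0' (hβt_le_t.trans ht1) hcase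
              _ ≤ t ^ p x := Real.rpow_le_rpow hβt0 hβt_le_t hpx0.le
        linarith [hh0 x]
      · -- pinf < p x : use Young
        have hy := young_aux hβ0.le ht0 hpinf0 hcase
        have he0 : 0 ≤ pinf * p x / (p x - pinf) :=
          div_nonneg (mul_nonneg hpinf0.le hpx0.le) (by linarith)
        have hBe : (c / M) ^ (pinf * p x / (p x - pinf)) ≤
            c ^ (pinf * p x / (p x - pinf)) :=
          Real.rpow_le_rpow hβ0.le hβc he0
        have hee : pinf * p x / (p x - pinf) = 1 / |1 / pinf - 1 / p x| := by
          rw [exp_eq_aux hpinf0 hpx0 hcase, abs_sub_comm]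
        have hxS : x ∈ S := ⟨hx, hcase.ne'⟩
        have hhx : h x = M * c ^ (1 / |1 / pinf - 1 / p x|) := hhS x hxS
        have hch : c ^ (1 / |1 / pinf - 1 / p x|) ≤ h x := by
          rw [hhx]
          exact le_mul_of_one_le_left
            (Real.rpow_nonneg hc0.le (1 / |1 / pinf - 1 / p x|)) hM1
        have : (c / M * t) ^ pinf ≤ t ^ p x + h x := by
          calc (c / M * t) ^ pinf
              ≤ t ^ p x + (c / M) ^ (pinf * p x / (p x - pinf)) := hy
            _ ≤ t ^ p x + c ^ (1 / |1 / pinf - 1 / p x|) := by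
                rw [← hee]; linarith
            _ ≤ t ^ p x + h x := by linarith
        linarith
end

section
/- Let Ω ⊆ ℝⁿ be measurable, let p : Ω → [1,∞) be bounded measurable, let r : Ω → [0,∞) be bounded measurable, and let a ∈ L^∞(Ω) with a ≥ 0. Then for every measurable set A ⊆ Ω with 0 < |A| < ∞: min{ |A|^{1/p⁺_A}, |A|^{1/p⁻_A} } ≤ ‖1_A‖_{L^Φ(Ω)} ≤ 2 (1+‖a‖_∞)^{1/p⁻_A} · max{ |A|^{1/p⁺_A} (log(e + 1/|A|))^{r⁺_A}, |A|^{1/p⁻_A} (log(1+e))^{r⁺_A} }. -/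
open MeasureTheory Set
open scoped ENNReal

/-- The function `Φ(x,t) = t^{p(x)} + a(x) t^{p(x)} (log(e+t))^{r(x)}`. -/
noncomputable def Phi2 {n : ℕ} (p r a : EuclideanSpace ℝ (Fin n) → ℝ)
    (x : EuclideanSpace ℝ (Fin n)) (t : ℝ) : ℝ :=
  t ^ p x + a x * t ^ p x * (Real.log (Real.exp 1 + t)) ^ r x

/-- The Luxemburg (quasi-)norm `‖u‖_{L^Φ(Ω)} = inf{λ > 0 : ∫_Ω Φ(x,|u(x)|/λ) dx ≤ 1}`,
valued in `ℝ≥0∞`, with `inf ∅ = ∞`. -/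
noncomputable def luxNorm {n : ℕ} (Ω : Set (EuclideanSpace ℝ (Fin n)))
    (Φ : EuclideanSpace ℝ (Fin n) → ℝ → ℝ)
    (u : EuclideanSpace ℝ (Fin n) → ℝ) : ℝ≥0∞ :=
  sInf ((fun l : ℝ => ENNReal.ofReal l) ''
    {l : ℝ | 0 < l ∧ (∫⁻ x in Ω, ENNReal.ofReal (Φ x (|u x| / l))) ≤ 1})

/-!
Since `Φ(x,0) = 0`, the modular of `1_A / λ` over `Ω` is `∫_A Φ(x, 1/λ) dx`, and everything
reduces to pointwise bounds for `Φ(x, 1/λ)` on `A` together with the choice of the exponent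
`p⁻_A` or `p⁺_A` according to whether `1/λ ≤ 1` or `1/λ ≥ 1`.

For the lower bound, `t^{p(x)} ≤ Φ(x,t)` and `t^{p(x)} ≥ min(t^{p⁻_A}, t^{p⁺_A})`, so an
admissible `λ` satisfies `|A| ≤ λ^{p⁺_A}` or `|A| ≤ λ^{p⁻_A}`.

For the upper bound, `log(e+t) ≥ 1` gives `Φ(x,t) ≤ (1+‖a‖_∞) t^{p(x)} log(e+t)^{r⁺_A}`, and
for the stated `λ` this is at most `1/|A|`: if `λ ≥ 1` use the exponent `p⁻_A` and
`log(e+1/λ) ≤ log(1+e)`; if `λ < 1` use `p⁺_A`, and then `|A| ≤ λ^{p⁺_A} ≤ λ` gives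
`log(e+1/λ) ≤ log(e+1/|A|)`.
-/

theorem one_le_log_exp_add {t : ℝ} (ht : 0 ≤ t) : 1 ≤ Real.log (Real.exp 1 + t) := by
  rw [Real.le_log_iff_exp_le (by positivity)]
  linarith

theorem min_rpow_le_rpow_of_mem_Icc {t a b e : ℝ} (ht : 0 < t) (he : e ∈ Icc a b) :
    min (t ^ a) (t ^ b) ≤ t ^ e := by
  rcases le_total t 1 with ht1 | ht1
  · exact (min_le_right _ _).trans (Real.rpow_le_rpow_of_exponent_ge ht ht1 he.2)
  · exact (min_le_left _ _).trans (Real.rpow_le_rpow_of_exponent_le ht1 he.1)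

theorem rpow_one_div_le_of_mul_one_div_rpow_le_one {μ l q : ℝ} (hμ : 0 ≤ μ) (hl : 0 < l)
    (hq : 0 < q) (h : μ * (1 / l) ^ q ≤ 1) : μ ^ (1 / q) ≤ l := by
  rw [Real.div_rpow zero_le_one hl.le, Real.one_rpow, mul_one_div,
    div_le_one (Real.rpow_pos_of_pos hl q)] at h
  rwa [one_div q, Real.rpow_inv_le_iff_of_pos hμ hl.le hq]

theorem min_rpow_one_div_le_of_mul_min_le_one {μ l p₀ p₁ : ℝ} (hμ : 0 ≤ μ) (hl : 0 < l)
    (hp₀ : 0 < p₀) (hp₀₁ : p₀ ≤ p₁) (h : μ * min ((1 / l) ^ p₀) ((1 / l) ^ p₁) ≤ 1) :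
    min (μ ^ (1 / p₁)) (μ ^ (1 / p₀)) ≤ l := by
  rcases le_total 1 l with hl1 | hl1
  · have hmin : (1 / l) ^ p₁ ≤ (1 / l) ^ p₀ :=
      Real.rpow_le_rpow_of_exponent_ge (by positivity) (by rwa [div_le_one hl]) hp₀₁
    rw [min_eq_right hmin] at h
    exact (min_le_left _ _).trans
      (rpow_one_div_le_of_mul_one_div_rpow_le_one hμ hl (hp₀.trans_le hp₀₁) h)
  · have hmin : (1 / l) ^ p₀ ≤ (1 / l) ^ p₁ :=
      Real.rpow_le_rpow_of_exponent_le (by rwa [le_div_iff₀ hl, one_mul]) hp₀₁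
    rw [min_eq_left hmin] at h
    exact (min_le_right _ _).trans (rpow_one_div_le_of_mul_one_div_rpow_le_one hμ hl hp₀ h)

theorem mul_le_rpow_of_rpow_one_div_mul_le {μ Λ M q : ℝ} (hμ : 0 ≤ μ) (hq : 1 ≤ q)
    (hΛ : 1 ≤ Λ) (h : μ ^ (1 / q) * Λ ≤ M) : μ * Λ ≤ M ^ q :=
  calc μ * Λ ≤ μ * Λ ^ q := by gcongr; exact Real.self_le_rpow_of_one_le hΛ hq
    _ = (μ ^ (1 / q) * Λ) ^ q := by
      rw [Real.mul_rpow (by positivity) (by positivity), one_div,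
        Real.rpow_inv_rpow hμ (by positivity)]
    _ ≤ M ^ q := by gcongr

theorem le_rpow_one_div_rpow {x p q : ℝ} (hx : 1 ≤ x) (hp : 0 < p) (hpq : p ≤ q) :
    x ≤ (x ^ (1 / p)) ^ q := by
  rw [← Real.rpow_mul (by positivity)]
  exact Real.self_le_rpow_of_one_le hx (by rwa [one_div_mul_eq_div, one_le_div hp])

theorem one_add_mul_mul_le_two_mul_rpow {μ S Λ M p q : ℝ} (hμ : 0 ≤ μ) (hS : 0 ≤ S)
    (hp : 0 < p) (hpq : p ≤ q) (hq : 1 ≤ q) (hΛ : 1 ≤ Λ) (h : μ ^ (1 / q) * Λ ≤ M) :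
    (1 + S) * (μ * Λ) ≤ (2 * (1 + S) ^ (1 / p) * M) ^ q := by
  have hM : 0 ≤ M := (by positivity : 0 ≤ μ ^ (1 / q) * Λ).trans h
  rw [Real.mul_rpow (by positivity) hM, Real.mul_rpow zero_le_two (by positivity), mul_assoc]
  exact (mul_le_mul (le_rpow_one_div_rpow (by linarith) hp hpq)
    (mul_le_rpow_of_rpow_one_div_mul_le hμ hq hΛ h) (by positivity) (by positivity)).trans
    (le_mul_of_one_le_left (by positivity) (Real.one_le_rpow one_le_two (by positivity)))

theorem mul_one_add_mul_rpow_mul_log_rpow_le_one {μ S rS M p₀ p₁ e : ℝ} (hμ : 0 < μ)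
    (hS : 0 ≤ S) (hrS : 0 ≤ rS) (hp₀ : 1 ≤ p₀)
    (hM₁ : μ ^ (1 / p₁) * Real.log (Real.exp 1 + 1 / μ) ^ rS ≤ M)
    (hM₀ : μ ^ (1 / p₀) * Real.log (1 + Real.exp 1) ^ rS ≤ M) (he : e ∈ Icc p₀ p₁) :
    μ * ((1 + S) * (1 / (2 * (1 + S) ^ (1 / p₀) * M)) ^ e *
      Real.log (Real.exp 1 + 1 / (2 * (1 + S) ^ (1 / p₀) * M)) ^ rS) ≤ 1 := by
  set l := 2 * (1 + S) ^ (1 / p₀) * M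
  have hM : 0 < M := lt_of_lt_of_le (mul_pos (Real.rpow_pos_of_pos hμ _)
    (Real.rpow_pos_of_pos (by linarith [one_le_log_exp_add (one_div_pos.2 hμ).le]) _)) hM₁
  have hl : 0 < l := by positivity
  have hrpow : ∀ {L : ℝ}, 1 ≤ L → 1 ≤ L ^ rS := fun hL => Real.one_le_rpow hL hrS
  have hreduce : ∀ q L : ℝ, (1 / l) ^ e ≤ (1 / l) ^ q → Real.log (Real.exp 1 + 1 / l) ≤ L →
      (1 + S) * (μ * L ^ rS) ≤ l ^ q →
      μ * ((1 + S) * (1 / l) ^ e * Real.log (Real.exp 1 + 1 / l) ^ rS) ≤ 1 := by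
    intro q L hexp hlog hmass
    have hlog_one := one_le_log_exp_add (one_div_pos.2 hl).le
    calc μ * ((1 + S) * (1 / l) ^ e * Real.log (Real.exp 1 + 1 / l) ^ rS)
        ≤ μ * ((1 + S) * (1 / l) ^ q * L ^ rS) := by gcongr
      _ = (1 + S) * (μ * L ^ rS) / l ^ q := by
        rw [Real.div_rpow zero_le_one hl.le, Real.one_rpow]; ring
      _ ≤ 1 := div_le_one_of_le₀ hmass (by positivity)
  rcases le_or_gt 1 l with hl1 | hl1
  · have hinv : 1 / l ≤ 1 := by rwa [div_le_one hl]
    refine hreduce p₀ _ (Real.rpow_le_rpow_of_exponent_ge (by positivity) hinv he.1) ?_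
      (one_add_mul_mul_le_two_mul_rpow hμ.le hS (by linarith) le_rfl hp₀
        (hrpow (one_le_log_exp_add zero_le_one)) (by rwa [add_comm (Real.exp 1)]))
    gcongr
  · have hp₁ : 1 ≤ p₁ := hp₀.trans (he.1.trans he.2)
    have hbound := one_add_mul_mul_le_two_mul_rpow hμ.le hS (by linarith) (he.1.trans he.2) hp₁
      (hrpow (one_le_log_exp_add (one_div_pos.2 hμ).le)) hM₁
    have hμl : μ ≤ l :=
      calc μ = 1 * (μ * 1) := by ring
        _ ≤ (1 + S) * (μ * Real.log (Real.exp 1 + 1 / μ) ^ rS) := by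
          gcongr
          · linarith
          · exact hrpow (one_le_log_exp_add (one_div_pos.2 hμ).le)
        _ ≤ l ^ p₁ := hbound
        _ ≤ l := by
          simpa using Real.rpow_le_rpow_of_exponent_ge hl hl1.le hp₁
    refine hreduce p₁ _ (Real.rpow_le_rpow_of_exponent_le ?_ he.2) ?_ hbound
    · rw [le_div_iff₀ hl]; linarith
    · gcongr

section Lebesgue

variable {α : Type*} [MeasurableSpace α] {μ : Measure α} {s : Set α} {f : α → ℝ} {c : ℝ}

theorem mul_toReal_le_one_of_setLIntegral_ofReal_le_one (hs : MeasurableSet s)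
    (hμs : μ s ≠ ∞) (hf : ∀ x ∈ s, c ≤ f x) (h : ∫⁻ x in s, ENNReal.ofReal (f x) ∂μ ≤ 1) :
    c * (μ s).toReal ≤ 1 := by
  rw [← ENNReal.ofReal_le_one, ENNReal.ofReal_mul' ENNReal.toReal_nonneg,
    ENNReal.ofReal_toReal hμs, ← setLIntegral_const]
  exact (setLIntegral_mono' hs fun x hx => ENNReal.ofReal_le_ofReal (hf x hx)).trans h

theorem setLIntegral_ofReal_le_one (hs : MeasurableSet s) (hμs : μ s ≠ ∞)
    (hf : ∀ x ∈ s, f x ≤ c) (h : c * (μ s).toReal ≤ 1) :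
    ∫⁻ x in s, ENNReal.ofReal (f x) ∂μ ≤ 1 :=
  calc ∫⁻ x in s, ENNReal.ofReal (f x) ∂μ ≤ ∫⁻ _ in s, ENNReal.ofReal c ∂μ :=
        setLIntegral_mono' hs fun x hx => ENNReal.ofReal_le_ofReal (hf x hx)
    _ = ENNReal.ofReal (c * (μ s).toReal) := by
        rw [setLIntegral_const, ENNReal.ofReal_mul' ENNReal.toReal_nonneg,
          ENNReal.ofReal_toReal hμs]
    _ ≤ 1 := ENNReal.ofReal_le_one.mpr h

theorem setLIntegral_indicator_one_div {Ω A : Set α} {Φ : α → ℝ → ℝ} (hΩ : MeasurableSet Ω)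
    (hA : MeasurableSet A) (hAΩ : A ⊆ Ω) (hΦ : ∀ x ∈ Ω, Φ x 0 = 0) (l : ℝ) :
    ∫⁻ x in Ω, ENNReal.ofReal (Φ x (|A.indicator (1 : α → ℝ) x| / l)) ∂μ =
      ∫⁻ x in A, ENNReal.ofReal (Φ x (1 / l)) ∂μ := by
  rw [← inter_eq_self_of_subset_left hAΩ, ← Measure.restrict_restrict hA,
    ← lintegral_indicator hA, inter_eq_self_of_subset_left hAΩ]
  refine setLIntegral_congr_fun hΩ fun x hx => ?_
  by_cases hxA : x ∈ A <;> simp [hxA, hΦ x hx]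

end Lebesgue

section Phi2

variable {n : ℕ} {p r a : EuclideanSpace ℝ (Fin n) → ℝ} {x : EuclideanSpace ℝ (Fin n)} {t : ℝ}

theorem Phi2_zero (hp : p x ≠ 0) : Phi2 p r a x 0 = 0 := by
  simp [Phi2, Real.zero_rpow hp]

theorem rpow_le_Phi2 (ha : 0 ≤ a x) (ht : 0 ≤ t) : t ^ p x ≤ Phi2 p r a x t := by
  have hlog := one_le_log_exp_add ht
  have : 0 ≤ a x * t ^ p x * Real.log (Real.exp 1 + t) ^ r x :=
    mul_nonneg (mul_nonneg ha (Real.rpow_nonneg ht _)) (Real.rpow_nonneg (by linarith) _)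
  unfold Phi2
  linarith

theorem Phi2_le {S rS : ℝ} (ht : 0 ≤ t) (ha : a x ≤ S) (hS : 0 ≤ S) (hr : r x ≤ rS)
    (hrS : 0 ≤ rS) :
    Phi2 p r a x t ≤ (1 + S) * t ^ p x * Real.log (Real.exp 1 + t) ^ rS := by
  have hlog := one_le_log_exp_add ht
  have hlogr : a x * Real.log (Real.exp 1 + t) ^ r x ≤ S * Real.log (Real.exp 1 + t) ^ rS :=
    mul_le_mul ha (Real.rpow_le_rpow_of_exponent_le hlog hr)
      (Real.rpow_nonneg (by linarith) _) hS
  calc Phi2 p r a x t = t ^ p x * (1 + a x * Real.log (Real.exp 1 + t) ^ r x) := by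
        unfold Phi2; ring
    _ ≤ t ^ p x * (Real.log (Real.exp 1 + t) ^ rS + S * Real.log (Real.exp 1 + t) ^ rS) := by
        gcongr
        exact Real.one_le_rpow hlog hrS
    _ = (1 + S) * t ^ p x * Real.log (Real.exp 1 + t) ^ rS := by ring

end Phi2

section luxNorm

variable {n : ℕ} {Ω A : Set (EuclideanSpace ℝ (Fin n))}

theorem le_luxNorm {Φ : EuclideanSpace ℝ (Fin n) → ℝ → ℝ} {u : EuclideanSpace ℝ (Fin n) → ℝ}
    {b : ℝ≥0∞}
    (h : ∀ l, 0 < l → ∫⁻ x in Ω, ENNReal.ofReal (Φ x (|u x| / l)) ≤ 1 → b ≤ ENNReal.ofReal l) :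
    b ≤ luxNorm Ω Φ u := by
  refine le_sInf ?_
  rintro _ ⟨l, ⟨hl, hint⟩, rfl⟩
  exact h l hl hint

theorem luxNorm_le {Φ : EuclideanSpace ℝ (Fin n) → ℝ → ℝ} {u : EuclideanSpace ℝ (Fin n) → ℝ}
    {l : ℝ} (hl : 0 < l) (h : ∫⁻ x in Ω, ENNReal.ofReal (Φ x (|u x| / l)) ≤ 1) :
    luxNorm Ω Φ u ≤ ENNReal.ofReal l :=
  sInf_le ⟨l, ⟨hl, h⟩, rfl⟩

variable {p r a : EuclideanSpace ℝ (Fin n) → ℝ} {p₀ p₁ : ℝ}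

theorem min_le_luxNorm_indicator (hΩ : MeasurableSet Ω) (hA : MeasurableSet A) (hAΩ : A ⊆ Ω)
    (hfin : volume A ≠ ∞) (hp₀ : 0 < p₀) (hp₀₁ : p₀ ≤ p₁) (hp : ∀ x ∈ A, p x ∈ Icc p₀ p₁)
    (hpΩ : ∀ x ∈ Ω, p x ≠ 0) (ha : ∀ x ∈ A, 0 ≤ a x) :
    min (ENNReal.ofReal ((volume A).toReal ^ (1 / p₁)))
        (ENNReal.ofReal ((volume A).toReal ^ (1 / p₀))) ≤
      luxNorm Ω (Phi2 p r a) (A.indicator 1) := by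
  refine le_luxNorm fun l hl hint => ?_
  rw [setLIntegral_indicator_one_div hΩ hA hAΩ fun x hx => Phi2_zero (hpΩ x hx)] at hint
  have hmass := mul_toReal_le_one_of_setLIntegral_ofReal_le_one hA hfin
    (fun x hx => (min_rpow_le_rpow_of_mem_Icc (by positivity) (hp x hx)).trans
      (rpow_le_Phi2 (ha x hx) (by positivity))) hint
  rw [mul_comm] at hmass
  rw [← ENNReal.ofReal_min]
  exact ENNReal.ofReal_le_ofReal
    (min_rpow_one_div_le_of_mul_min_le_one ENNReal.toReal_nonneg hl hp₀ hp₀₁ hmass)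

theorem luxNorm_indicator_le (hΩ : MeasurableSet Ω) (hA : MeasurableSet A) (hAΩ : A ⊆ Ω)
    (hpos : 0 < volume A) (hfin : volume A ≠ ∞) {rS S M : ℝ} (hp₀ : 1 ≤ p₀)
    (hp : ∀ x ∈ A, p x ∈ Icc p₀ p₁) (hpΩ : ∀ x ∈ Ω, p x ≠ 0) (hr : ∀ x ∈ A, r x ≤ rS)
    (hrS : 0 ≤ rS) (ha : ∀ x ∈ A, a x ≤ S) (hS : 0 ≤ S)
    (hM₁ : (volume A).toReal ^ (1 / p₁) *
      Real.log (Real.exp 1 + 1 / (volume A).toReal) ^ rS ≤ M)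
    (hM₀ : (volume A).toReal ^ (1 / p₀) * Real.log (1 + Real.exp 1) ^ rS ≤ M) :
    luxNorm Ω (Phi2 p r a) (A.indicator 1) ≤ ENNReal.ofReal (2 * (1 + S) ^ (1 / p₀) * M) := by
  have hμ : 0 < (volume A).toReal := ENNReal.toReal_pos hpos.ne' hfin
  have hM : 0 < M := lt_of_lt_of_le (mul_pos (Real.rpow_pos_of_pos hμ _)
    (Real.rpow_pos_of_pos (by linarith [one_le_log_exp_add (one_div_pos.2 hμ).le]) _)) hM₁
  refine luxNorm_le (by positivity) ?_
  rw [setLIntegral_indicator_one_div hΩ hA hAΩ fun x hx => Phi2_zero (hpΩ x hx)]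
  refine setLIntegral_ofReal_le_one hA hfin (c := (volume A).toReal⁻¹) (fun x hx => ?_)
    (inv_mul_cancel₀ hμ.ne').le
  refine (Phi2_le (by positivity) (ha x hx) hS (hr x hx) hrS).trans ?_
  rw [← one_div, le_div_iff₀' hμ]
  exact mul_one_add_mul_rpow_mul_log_rpow_le_one hμ hS hrS hp₀ hM₁ hM₀ (hp x hx)

end luxNorm

theorem stmt_12_general {n : ℕ}
    (Ω : Set (EuclideanSpace ℝ (Fin n))) (hΩm : MeasurableSet Ω)
    (p r a : EuclideanSpace ℝ (Fin n) → ℝ)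
    (hp1 : ∀ x ∈ Ω, 1 ≤ p x) (hpB : BddAbove (p '' Ω))
    (hr0 : ∀ x ∈ Ω, 0 ≤ r x) (hrB : BddAbove (r '' Ω))
    (ha0 : ∀ x ∈ Ω, 0 ≤ a x) (haB : BddAbove (a '' Ω)) :
    ∀ A : Set (EuclideanSpace ℝ (Fin n)), A ⊆ Ω → MeasurableSet A →
      0 < volume A → volume A < ⊤ →
      min (ENNReal.ofReal ((volume A).toReal ^ (1 / sSup (p '' A))))
          (ENNReal.ofReal ((volume A).toReal ^ (1 / sInf (p '' A)))) ≤
        luxNorm Ω (Phi2 p r a) (A.indicator 1) ∧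
      luxNorm Ω (Phi2 p r a) (A.indicator 1) ≤
        ENNReal.ofReal (2 * (1 + sSup (a '' Ω)) ^ (1 / sInf (p '' A)) *
          max ((volume A).toReal ^ (1 / sSup (p '' A)) *
                (Real.log (Real.exp 1 + 1 / (volume A).toReal)) ^ sSup (r '' A))
              ((volume A).toReal ^ (1 / sInf (p '' A)) *
                (Real.log (1 + Real.exp 1)) ^ sSup (r '' A))) := by
  intro A hA hAm hpos hfin
  obtain ⟨x₀, hx₀⟩ := nonempty_of_measure_ne_zero hpos.ne'
  have hp1A : ∀ y ∈ p '' A, 1 ≤ y := forall_mem_image.2 fun x hx => hp1 x (hA hx)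
  have hp : ∀ x ∈ A, p x ∈ Icc (sInf (p '' A)) (sSup (p '' A)) := fun x hx =>
    ⟨csInf_le ⟨1, hp1A⟩ (mem_image_of_mem p hx),
      le_csSup (hpB.mono (image_mono hA)) (mem_image_of_mem p hx)⟩
  have hpInf : 1 ≤ sInf (p '' A) := le_csInf (⟨p x₀, mem_image_of_mem p hx₀⟩) hp1A
  have hpΩ : ∀ x ∈ Ω, p x ≠ 0 := fun x hx => (zero_lt_one.trans_le (hp1 x hx)).ne'
  have hr : ∀ x ∈ A, r x ≤ sSup (r '' A) := fun x hx =>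
    le_csSup (hrB.mono (image_mono hA)) (mem_image_of_mem r hx)
  have ha : ∀ x ∈ A, a x ≤ sSup (a '' Ω) := fun x hx => le_csSup haB (mem_image_of_mem a (hA hx))
  exact ⟨min_le_luxNorm_indicator hΩm hAm hA hfin.ne (by linarith)
      ((hp x₀ hx₀).1.trans (hp x₀ hx₀).2) hp hpΩ fun x hx => ha0 x (hA hx),
    luxNorm_indicator_le hΩm hAm hA hpos hfin.ne hpInf hp hpΩ hr
      ((hr0 x₀ (hA hx₀)).trans (hr x₀ hx₀)) ha ((ha0 x₀ (hA hx₀)).trans (ha x₀ hx₀))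
      (le_max_left _ _) (le_max_right _ _)⟩

/-- two-sided estimate for the Luxemburg norm of an indicator when
`r ≥ 0`:
`min{|A|^{1/p⁺_A}, |A|^{1/p⁻_A}} ≤ ‖1_A‖_{L^Φ(Ω)} ≤ 2(1+‖a‖_∞)^{1/p⁻_A} ·
max{|A|^{1/p⁺_A} (log(e+1/|A|))^{r⁺_A}, |A|^{1/p⁻_A} (log(1+e))^{r⁺_A}}`. -/
theorem stmt_12 {n : ℕ}
    (Ω : Set (EuclideanSpace ℝ (Fin n))) (hΩm : MeasurableSet Ω)
    (p r a : EuclideanSpace ℝ (Fin n) → ℝ)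
    (hpm : Measurable p) (hp1 : ∀ x ∈ Ω, 1 ≤ p x) (hpB : BddAbove (p '' Ω))
    (hrm : Measurable r) (hr0 : ∀ x ∈ Ω, 0 ≤ r x) (hrB : BddAbove (r '' Ω))
    (ham : Measurable a) (ha0 : ∀ x ∈ Ω, 0 ≤ a x) (haB : BddAbove (a '' Ω)) :
    ∀ A : Set (EuclideanSpace ℝ (Fin n)), A ⊆ Ω → MeasurableSet A →
      0 < volume A → volume A < ⊤ →
      min (ENNReal.ofReal ((volume A).toReal ^ (1 / sSup (p '' A))))
          (ENNReal.ofReal ((volume A).toReal ^ (1 / sInf (p '' A)))) ≤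
        luxNorm Ω (Phi2 p r a) (A.indicator 1) ∧
      luxNorm Ω (Phi2 p r a) (A.indicator 1) ≤
        ENNReal.ofReal (2 * (1 + sSup (a '' Ω)) ^ (1 / sInf (p '' A)) *
          max ((volume A).toReal ^ (1 / sSup (p '' A)) *
                (Real.log (Real.exp 1 + 1 / (volume A).toReal)) ^ sSup (r '' A))
              ((volume A).toReal ^ (1 / sInf (p '' A)) *
                (Real.log (1 + Real.exp 1)) ^ sSup (r '' A))) :=
  stmt_12_general Ω hΩm p r a hp1 hpB hr0 hrB ha0 haB
end
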